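/- arXiv:1505.04884 — 6 statements merged into one kernel-verified Lean document; each statement's English description precedes it below -/
import Mathlib

section
/- The kernel g₂(P₁) of the symbol of the Rapcsák operator has dimension n² + (n−1)²; precisely, the subspace of symmetric bilinear forms A : V × V → ℝ satisfying A(X, C) = 0 for all X ∈ V and A(S, J X) = A(X, C) for all X ∈ V has dimension n² + (n−1)². -/
set_option synthInstance.maxHeartbeats 1000000
set_option maxHeartbeats 1000000

noncomputable section

/-- The pointwise model `V = (Fin n → ℝ) × (Fin n → ℝ)` of the double tangent space
`T_x(TM)` for a spray on an `n`-dimensional manifold, in an adapted basis. -/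
abbrev V (n : ℕ) : Type := (Fin n → ℝ) × (Fin n → ℝ)

/-- The vertical endomorphism `J (x, y) = (0, x)`. -/
def Jmap (n : ℕ) : V n →ₗ[ℝ] V n where
  toFun p := (0, p.1)
  map_add' a b := by simp
  map_smul' c a := by simp

/-- The horizontal projector `P_h (x, y) = (x, 0)`. -/
def Ph (n : ℕ) : V n →ₗ[ℝ] V n where
  toFun p := (p.1, 0)
  map_add' a b := by simp
  map_smul' c a := by simp

/-- The `j`-th standard basis vector of `Fin n → ℝ`, indexed by `1 ≤ j ≤ n`
(zero if `j` is out of range). -/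
def dlt (n j : ℕ) : Fin n → ℝ := fun i => if (i : ℕ) + 1 = j then 1 else 0

/-- The horizontal basis vector `h_j`, `1 ≤ j ≤ n`. -/
def hvec (n j : ℕ) : V n := (dlt n j, 0)

/-- The vertical basis vector `v_j`, `1 ≤ j ≤ n`. -/
def vvec (n j : ℕ) : V n := (0, dlt n j)

/-- The spray vector `S = h_n`. -/
def Svec (n : ℕ) : V n := hvec n n

/-- The Liouville vector `C = v_n = J S`. -/
def Cvec (n : ℕ) : V n := vvec n n

/-- Bilinear forms on `V n`. -/
abbrev Bil (n : ℕ) := V n →ₗ[ℝ] V n →ₗ[ℝ] ℝ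

/-- Trilinear forms on `V n` (bundled). -/
abbrev Tri (n : ℕ) := V n →ₗ[ℝ] V n →ₗ[ℝ] V n →ₗ[ℝ] ℝ

/-- The kernel `g₂(P₁)` of the symbol of the Rapcsák operator: symmetric bilinear
forms `A` on `V` with `A(X, C) = 0` and `A(S, J X) = A(X, C)` for all `X`. -/
def g2P1 (n : ℕ) : Submodule ℝ (Bil n) where
  carrier := {A | (∀ X Y, A X Y = A Y X) ∧ (∀ X, A X (Cvec n) = 0) ∧
    (∀ X, A (Svec n) (Jmap n X) = A X (Cvec n))}
  add_mem' := by
    rintro a b ⟨ha1, ha2, ha3⟩ ⟨hb1, hb2, hb3⟩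
    refine ⟨fun X Y => ?_, fun X => ?_, fun X => ?_⟩ <;>
      simp only [LinearMap.add_apply]
    · linear_combination ha1 X Y + hb1 X Y
    · linear_combination ha2 X + hb2 X
    · linear_combination ha3 X + hb3 X
  zero_mem' := ⟨fun X Y => by simp, fun X => by simp, fun X => by simp⟩
  smul_mem' := by
    rintro c a ⟨ha1, ha2, ha3⟩
    refine ⟨fun X Y => ?_, fun X => ?_, fun X => ?_⟩ <;>
      simp only [LinearMap.smul_apply, smul_eq_mul]
    · linear_combination c * ha1 X Y
    · linear_combination c * ha2 X
    · linear_combination c * ha3 X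

/-!
In the adapted basis `h_i, v_i`, membership in `g₂(P₁)` says that `A` is symmetric and that the
entries `A(X, v_n)` and `A(h_n, v_k)` vanish; the latter because `J h_k = v_k`, so that
`A(S, J h_k) = A(h_k, C) = 0`. A symmetric form is a free choice of one coefficient for each
unordered pair of basis vectors, so the dimension is the number `(2n+1)n` of such pairs minus the
`2n + (n - 1)` pairs forced to vanish, i.e. `2n² - 2n + 1 = n² + (n - 1)²`.
-/

open Module Finset

section SymmetricForms

variable {R M ι : Type*} [CommRing R] [AddCommGroup M] [Module R M] [Fintype ι] [DecidableEq ι]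
  (b : Basis ι R M)

def symmFormsVanishingOn (Z : Finset (Sym2 ι)) : Submodule R (M →ₗ[R] M →ₗ[R] R) where
  carrier := {A | (∀ x y, A x y = A y x) ∧ ∀ i j, s(i, j) ∈ Z → A (b i) (b j) = 0}
  add_mem' := by
    rintro A B ⟨hA, hA'⟩ ⟨hB, hB'⟩
    exact ⟨fun x y => by simp [hA x y, hB x y], fun i j h => by simp [hA' i j h, hB' i j h]⟩
  zero_mem' := ⟨fun _ _ => rfl, fun _ _ _ => rfl⟩
  smul_mem' := by
    rintro c A ⟨hA, hA'⟩
    exact ⟨fun x y => by simp [hA x y], fun i j h => by simp [hA' i j h]⟩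

def Module.Basis.symmForm : (Sym2 ι →₀ R) →ₗ[R] M →ₗ[R] M →ₗ[R] R :=
  (Matrix.toLinearMap₂ b b).toLinearMap ∘ₗ
    { toFun := fun g => Matrix.of fun i j => g s(i, j)
      map_add' := fun _ _ => by ext; simp
      map_smul' := fun _ _ => by ext; simp }

@[simp]
lemma Module.Basis.symmForm_apply_basis (g : Sym2 ι →₀ R) (i j : ι) :
    b.symmForm g (b i) (b j) = g s(i, j) := by
  simp only [Module.Basis.symmForm, LinearMap.coe_comp, Function.comp_apply, LinearEquiv.coe_coe,
    LinearMap.coe_mk, AddHom.coe_mk, Matrix.toLinearMap₂_apply_basis, Matrix.of_apply]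

lemma Module.Basis.symmForm_injective : Function.Injective b.symmForm := by
  intro g h hgh
  ext z
  induction z using Sym2.ind with
  | _ i j => simpa using LinearMap.congr_fun₂ hgh (b i) (b j)

lemma Module.Basis.map_symmForm_supported (Z : Finset (Sym2 ι)) :
    (Finsupp.supported R R (↑Zᶜ : Set (Sym2 ι))).map b.symmForm =
      symmFormsVanishingOn b Z := by
  ext A
  constructor
  · rintro ⟨g, hg, rfl⟩
    refine ⟨fun x y => ?_, fun i j hij => ?_⟩
    · have : b.symmForm g = (b.symmForm g).flip :=
        LinearMap.ext_basis b b fun i j => by simp [Sym2.eq_swap]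
      exact LinearMap.congr_fun₂ this x y
    · simpa using Finsupp.notMem_support_iff.mp fun h => (by simpa using hg h : s(i, j) ∉ Z) hij
  · rintro ⟨hsymm, hZ⟩
    refine ⟨Finsupp.equivFunOnFinite.symm
      (Sym2.lift ⟨fun i j => A (b i) (b j), fun i j => hsymm _ _⟩), fun z hz => ?_,
      LinearMap.ext_basis b b fun i j => by simp⟩
    induction z using Sym2.ind with
    | _ i j =>
      rw [Finset.coe_compl, Set.mem_compl_iff, Finset.mem_coe]
      intro hij
      simp [hZ i j hij] at hz

theorem finrank_symmFormsVanishingOn [StrongRankCondition R] (Z : Finset (Sym2 ι)) :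
    finrank R (symmFormsVanishingOn b Z) = #Zᶜ := by
  rw [← b.map_symmForm_supported,
    ← (Submodule.equivMapOfInjective _ b.symmForm_injective _).finrank_eq,
    (Finsupp.supportedEquivFinsupp _).finrank_eq, finrank_finsupp_self]
  exact Fintype.card_coe _

end SymmetricForms

section Rapcsak

open Sum

variable (m : ℕ)

def adaptedBasis (n : ℕ) : Basis (Fin n ⊕ Fin n) ℝ (V n) :=
  (Pi.basisFun ℝ (Fin n)).prod (Pi.basisFun ℝ (Fin n))

lemma adaptedBasis_inl (n : ℕ) (i : Fin n) : adaptedBasis n (inl i) = (Pi.single i 1, 0) := by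
  simp [adaptedBasis]

lemma adaptedBasis_inr (n : ℕ) (i : Fin n) : adaptedBasis n (inr i) = (0, Pi.single i 1) := by
  simp [adaptedBasis]

lemma dlt_succ_self : dlt (m + 1) (m + 1) = Pi.single (Fin.last m) 1 := by
  funext i
  simp [dlt, Pi.single_apply, Fin.ext_iff]

lemma Svec_eq_adaptedBasis : Svec (m + 1) = adaptedBasis (m + 1) (inl (Fin.last m)) := by
  rw [adaptedBasis_inl, Svec, hvec, dlt_succ_self]

lemma Cvec_eq_adaptedBasis : Cvec (m + 1) = adaptedBasis (m + 1) (inr (Fin.last m)) := by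
  rw [adaptedBasis_inr, Cvec, vvec, dlt_succ_self]

lemma Jmap_adaptedBasis_inl (n : ℕ) (i : Fin n) :
    Jmap n (adaptedBasis n (inl i)) = adaptedBasis n (inr i) := by
  rw [adaptedBasis_inl, adaptedBasis_inr]; rfl

lemma Jmap_adaptedBasis_inr (n : ℕ) (i : Fin n) : Jmap n (adaptedBasis n (inr i)) = 0 := by
  rw [adaptedBasis_inr]; rfl

lemma mem_g2P1_iff (A : Bil (m + 1)) :
    A ∈ g2P1 (m + 1) ↔ (∀ X Y, A X Y = A Y X) ∧
      (∀ p, A (adaptedBasis (m + 1) p) (Cvec (m + 1)) = 0) ∧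
      ∀ k, A (Svec (m + 1)) (adaptedBasis (m + 1) (inr k)) = 0 := by
  constructor
  · rintro ⟨hsymm, hC, hSJ⟩
    refine ⟨hsymm, fun p => hC _, fun k => ?_⟩
    rw [← Jmap_adaptedBasis_inl, hSJ, hC]
  · rintro ⟨hsymm, hC, hS⟩
    have hC' : A.flip (Cvec (m + 1)) = 0 := (adaptedBasis (m + 1)).ext fun p => hC p
    have hSJ : A (Svec (m + 1)) ∘ₗ Jmap (m + 1) = 0 :=
      (adaptedBasis (m + 1)).ext fun
        | inl k => by simpa [Jmap_adaptedBasis_inl] using hS k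
        | inr k => by simp [Jmap_adaptedBasis_inr]
    exact ⟨hsymm, fun X => LinearMap.congr_fun hC' X,
      fun X => (LinearMap.congr_fun hSJ X).trans (LinearMap.congr_fun hC' X).symm⟩

/-- The entries `A(X, C)` and `A(S, v_k)` for `k < n`; `A(S, C)` is already among the former. -/
def g2P1ZeroPattern : Finset (Sym2 (Fin (m + 1) ⊕ Fin (m + 1))) :=
  (univ.image fun p => s(p, inr (Fin.last m))) ∪
    univ.image fun k : Fin m => s(inl (Fin.last m), inr k.castSucc)

lemma card_g2P1ZeroPattern : #(g2P1ZeroPattern m) = 3 * m + 2 := by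
  rw [g2P1ZeroPattern, card_union_of_disjoint, card_image_of_injective, card_image_of_injective]
  · simp; ring
  · intro k l h
    simpa using Sym2.congr_right.mp h
  · intro p q h
    exact Sym2.congr_left.mp h
  · simp only [disjoint_left, mem_image, mem_univ, true_and, forall_exists_index]
    rintro _ p rfl ⟨k, h⟩
    simp at h

lemma g2P1_eq_symmFormsVanishingOn :
    g2P1 (m + 1) = symmFormsVanishingOn (adaptedBasis (m + 1)) (g2P1ZeroPattern m) := by
  ext A
  rw [mem_g2P1_iff, Cvec_eq_adaptedBasis, Svec_eq_adaptedBasis]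
  constructor
  · rintro ⟨hsymm, hC, hS⟩
    refine ⟨hsymm, fun i j hij => ?_⟩
    simp only [g2P1ZeroPattern, mem_union, mem_image, mem_univ, true_and, Sym2.eq_iff]
      at hij
    rcases hij with ⟨p, ⟨rfl, rfl⟩ | ⟨rfl, rfl⟩⟩ |
      ⟨k, ⟨rfl, rfl⟩ | ⟨rfl, rfl⟩⟩
    · exact hC p
    · rw [hsymm]; exact hC p
    · exact hS _
    · rw [hsymm]; exact hS _
  · rintro ⟨hsymm, hZ⟩
    refine ⟨hsymm, fun p => hZ _ _ (mem_union_left _ (mem_image_of_mem _ (mem_univ p))),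
      fun k => ?_⟩
    apply hZ
    rcases Fin.eq_castSucc_or_eq_last k with ⟨k, rfl⟩ | rfl
    · exact mem_union_right _ (mem_image_of_mem _ (mem_univ k))
    · exact mem_union_left _ (mem_image_of_mem _ (mem_univ _))

end Rapcsak

/-- the kernel `g₂(P₁)` of the symbol of the Rapcsák operator has
dimension `n² + (n − 1)²`. -/
theorem dim_g2P1 (n : ℕ) (hn : 1 ≤ n) :
    Module.finrank ℝ (g2P1 n) = n ^ 2 + (n - 1) ^ 2 := by
  obtain ⟨m, rfl⟩ := Nat.exists_eq_add_of_le' hn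
  rw [g2P1_eq_symmFormsVanishingOn, finrank_symmFormsVanishingOn, card_compl, Sym2.card,
    card_g2P1ZeroPattern, Fintype.card_sum, Fintype.card_fin, Nat.choose_two_right,
    Nat.add_sub_cancel, Nat.add_sub_cancel]
  apply Nat.sub_eq_of_eq_add
  apply Nat.div_eq_of_eq_mul_left two_pos
  ring
end
end

section
/- The composition τ₁ ∘ σ₃(P₁) vanishes: for every symmetric trilinear form A on V, the pair (B_S, B_C) with B_S(X,Y) := A(X, S, J Y) − A(X, Y, C) and B_C(X,Y) := A(X, Y, C) satisfies, for all X, Y ∈ V: (i) B_S(J X, P_h Y) − B_S(P_h Y, J X) − B_S(J Y, P_h X) + B_S(P_h X, J Y) = 0; (ii) B_S(X, S) = 0; (iii) B_S(X, J Y) + B_C(X, J Y) = 0; (iv) B_S(C, P_h X) − B_C(S, J X) + B_C(P_h X, C) = 0. -/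
set_option synthInstance.maxHeartbeats 1000000
set_option maxHeartbeats 1000000

noncomputable section

/-- the composition `τ₁ ∘ σ₃(P₁)` vanishes. -/
theorem tau1_comp_sigma3P1 (n : ℕ) (hn : 1 ≤ n) (A : Tri n)
    (hsym12 : ∀ X Y Z, A X Y Z = A Y X Z) (hsym23 : ∀ X Y Z, A X Y Z = A X Z Y)
    (BS BC : V n → V n → ℝ)
    (hBS : ∀ X Y, BS X Y = A X (Svec n) (Jmap n Y) - A X Y (Cvec n))
    (hBC : ∀ X Y, BC X Y = A X Y (Cvec n)) :
    (∀ X Y, BS (Jmap n X) (Ph n Y) - BS (Ph n Y) (Jmap n X)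
      - BS (Jmap n Y) (Ph n X) + BS (Ph n X) (Jmap n Y) = 0) ∧
    (∀ X, BS X (Svec n) = 0) ∧
    (∀ X Y, BS X (Jmap n Y) + BC X (Jmap n Y) = 0) ∧
    (∀ X, BS (Cvec n) (Ph n X) - BC (Svec n) (Jmap n X) + BC (Ph n X) (Cvec n) = 0) := by
  have hJJ : ∀ X : V n, Jmap n (Jmap n X) = 0 := fun X => rfl
  have hJPh : ∀ X : V n, Jmap n (Ph n X) = Jmap n X := fun X => rfl
  have hJS : Jmap n (Svec n) = Cvec n := rfl
  have hA0 : ∀ X Y : V n, A X Y 0 = 0 := fun X Y => map_zero _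
  refine ⟨?_, ?_, ?_, ?_⟩
  · intro X Y
    simp only [hBS, hJJ, hJPh, hA0]
    rw [hsym12 (Jmap n X) (Svec n) (Jmap n Y),
        hsym23 (Svec n) (Jmap n X) (Jmap n Y),
        hsym12 (Jmap n X) (Ph n Y), hsym12 (Jmap n Y) (Ph n X),
        hsym12 (Svec n) (Jmap n Y) (Jmap n X)]
    ring
  · intro X
    simp [hBS, hJS]
  · intro X Y
    simp only [hBS, hBC, hJJ, hA0]
    ring
  · intro X
    simp only [hBS, hBC, hJPh, hJS]
    rw [hsym12 (Cvec n) (Svec n) (Jmap n X),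
        hsym23 (Svec n) (Cvec n) (Jmap n X),
        hsym12 (Cvec n) (Ph n X) (Cvec n),
        hsym23 (Ph n X) (Cvec n) (Cvec n)]
    ring
end
end

section
/- The kernel of τ₁ has dimension (7n² − n)/2; precisely, the subspace of pairs (B_S, B_C), where B_S is a bilinear form on V and B_C is a symmetric bilinear form on V, satisfying for all X, Y ∈ V: (i) B_S(J X, P_h Y) − B_S(P_h Y, J X) − B_S(J Y, P_h X) + B_S(P_h X, J Y) = 0; (ii) B_S(X, S) = 0; (iii) B_S(X, J Y) + B_C(X, J Y) = 0; (iv) B_S(C, P_h X) − B_C(S, J X) + B_C(P_h X, C) = 0, has dimension (7n² − n)/2. -/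
set_option synthInstance.maxHeartbeats 1000000
set_option maxHeartbeats 1000000

noncomputable section

/-- The kernel of `τ₁`: pairs `(B_S, B_C)` with `B_S` bilinear and `B_C` symmetric
bilinear satisfying the four equations `τ¹_S = τ²_S = τ¹_{SC} = τ²_{SC} = 0`. -/
def kerTau1 (n : ℕ) : Submodule ℝ (Bil n × Bil n) where
  carrier := {B | (∀ X Y, B.2 X Y = B.2 Y X) ∧
    (∀ X Y, B.1 (Jmap n X) (Ph n Y) - B.1 (Ph n Y) (Jmap n X)
      - B.1 (Jmap n Y) (Ph n X) + B.1 (Ph n X) (Jmap n Y) = 0) ∧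
    (∀ X, B.1 X (Svec n) = 0) ∧
    (∀ X Y, B.1 X (Jmap n Y) + B.2 X (Jmap n Y) = 0) ∧
    (∀ X, B.1 (Cvec n) (Ph n X) - B.2 (Svec n) (Jmap n X) + B.2 (Ph n X) (Cvec n) = 0)}
  add_mem' := by
    rintro a b ⟨ha0, ha1, ha2, ha3, ha4⟩ ⟨hb0, hb1, hb2, hb3, hb4⟩
    refine ⟨fun X Y => ?_, fun X Y => ?_, fun X => ?_, fun X Y => ?_, fun X => ?_⟩ <;>
      simp only [Prod.fst_add, Prod.snd_add, LinearMap.add_apply]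
    · linear_combination ha0 X Y + hb0 X Y
    · linear_combination ha1 X Y + hb1 X Y
    · linear_combination ha2 X + hb2 X
    · linear_combination ha3 X Y + hb3 X Y
    · linear_combination ha4 X + hb4 X
  zero_mem' := ⟨fun X Y => by simp, fun X Y => by simp, fun X => by simp,
    fun X Y => by simp, fun X => by simp⟩
  smul_mem' := by
    rintro c a ⟨ha0, ha1, ha2, ha3, ha4⟩
    refine ⟨fun X Y => ?_, fun X Y => ?_, fun X => ?_, fun X Y => ?_, fun X => ?_⟩ <;>
      simp only [Prod.smul_fst, Prod.smul_snd, LinearMap.smul_apply, smul_eq_mul]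
    · linear_combination c * ha0 X Y
    · linear_combination c * ha1 X Y
    · linear_combination c * ha2 X
    · linear_combination c * ha3 X Y
    · linear_combination c * ha4 X

/-!
Condition (iv) follows from (i)–(iii), and an element `(B_S, B_C)` of the kernel is freely
determined by four blocks:
* `T(X, y) = B_S(X, h_y)`, which by (ii) is any bilinear map `V × ℝⁿ → ℝ` vanishing at
  `y = δ_n`;
* `Σ(x, y) = B_S(v_x, h_y) + B_S(h_x, v_y)`, symmetric by (i);
* `Q(x, y) = B_S(v_x, v_y)`, symmetric because (iii) gives `B_C(X, J Y) = -B_S(X, J Y)`;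
* `G(x, y) = B_C(h_x, h_y)`, symmetric.
Indeed `B_S(h_x, v_y) = Σ(x, y) - T(v_x, y)`, and (iii) together with the symmetry of `B_C`
recovers every other block of `B_C` from `B_S`. Hence the dimension is
`2n(n - 1) + 3 · n(n + 1)/2 = (7n² - n)/2`.
-/

open Module

namespace LinearMap.BilinForm

variable (K M : Type*) [Field K] [AddCommGroup M] [Module K M]

def symmetricSubmodule : Submodule K (LinearMap.BilinForm K M) where
  carrier := {B | B.IsSymm}
  add_mem' := IsSymm.add
  zero_mem' := isSymm_zero
  smul_mem' c _ hB := hB.smul c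

variable {K M}

theorem mem_symmetricSubmodule {B : LinearMap.BilinForm K M} :
    B ∈ symmetricSubmodule K M ↔ B.IsSymm :=
  Iff.rfl

def symmetricSubmoduleEquiv {ι : Type*} [Fintype ι] [DecidableEq ι] (b : Basis ι K M) :
    symmetricSubmodule K M ≃ₗ[K] (Sym2 ι → K) where
  toFun B := Sym2.lift ⟨fun i j => B.1 (b i) (b j), fun i j => B.2.eq (b i) (b j)⟩
  map_add' B C := by ext z; induction z using Sym2.ind; simp
  map_smul' c B := by ext z; induction z using Sym2.ind; simp
  invFun f := ⟨Matrix.toBilin b (Matrix.of fun i j => f s(i, j)), by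
    rw [mem_symmetricSubmodule, Matrix.isSymm_toBilin_iff_isSymm, Matrix.IsSymm.ext_iff]
    simp only [Matrix.of_apply, Sym2.eq_swap, implies_true]⟩
  left_inv B := Subtype.ext <| (toMatrix b).injective <| by
    rw [toMatrix_toBilin]
    ext i j
    simp only [Sym2.lift_mk, Matrix.of_apply, toMatrix_apply]
  right_inv f := by
    ext z
    induction z using Sym2.ind
    simp [← toMatrix_apply]

theorem finrank_symmetricSubmodule [FiniteDimensional K M] :
    finrank K (symmetricSubmodule K M) = finrank K M * (finrank K M + 1) / 2 := by
  rw [(symmetricSubmoduleEquiv (finBasis K M)).finrank_eq, finrank_fintype_fun_eq_card,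
    Sym2.card, Fintype.card_fin, Nat.choose_two_right, Nat.add_sub_cancel, mul_comm]

end LinearMap.BilinForm

namespace LinearMap

section VanishingRightAt

variable (K M : Type*) {N : Type*} [Field K] [AddCommGroup M] [Module K M] [AddCommGroup N]
  [Module K N]

def vanishingRightAt (e : N) : Submodule K (M →ₗ[K] N →ₗ[K] K) :=
  ker (compRight K (applyₗ e))

variable {K M}

theorem mem_vanishingRightAt {e : N} {T : M →ₗ[K] N →ₗ[K] K} :
    T ∈ vanishingRightAt K M e ↔ ∀ x, T x e = 0 := by
  simp [vanishingRightAt, LinearMap.ext_iff]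

theorem finrank_vanishingRightAt [FiniteDimensional K M] [FiniteDimensional K N] {e : N}
    (he : e ≠ 0) : finrank K (vanishingRightAt K M e) = finrank K M * (finrank K N - 1) := by
  obtain ⟨φ, hφ⟩ := Projective.exists_dual_eq_one K he
  have hsurj :
    range (compRight K (applyₗ e) : (M →ₗ[K] N →ₗ[K] K) →ₗ[K] M →ₗ[K] K) = ⊤ :=
    range_eq_top.2 fun g => ⟨smulRight g φ, by ext x; simp [hφ]⟩
  have hrank := finrank_range_add_finrank_ker (K := K) (V := M →ₗ[K] N →ₗ[K] K)
    (V₂ := M →ₗ[K] K) (compRight K (applyₗ e))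
  rw [hsurj, finrank_top] at hrank
  simp only [finrank_linearMap, finrank_self, mul_one] at hrank
  rw [vanishingRightAt, Nat.mul_sub, mul_one]
  exact Nat.eq_sub_of_add_eq' hrank

end VanishingRightAt

theorem apply_prod_eq_sum_blocks {R M₁ M₂ N₁ N₂ P : Type*} [CommSemiring R]
    [AddCommMonoid M₁] [AddCommMonoid M₂] [AddCommMonoid N₁] [AddCommMonoid N₂]
    [AddCommMonoid P] [Module R M₁] [Module R M₂] [Module R N₁] [Module R N₂] [Module R P]
    (B : M₁ × M₂ →ₗ[R] N₁ × N₂ →ₗ[R] P) (X : M₁ × M₂) (Y : N₁ × N₂) :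
    B X Y = B (X.1, 0) (Y.1, 0) + B (X.1, 0) (0, Y.2) + B (0, X.2) (Y.1, 0)
      + B (0, X.2) (0, Y.2) := by
  have hX : X = (X.1, 0) + (0, X.2) := by simp
  have hY : Y = (Y.1, 0) + (0, Y.2) := by simp
  conv_lhs => rw [hX, hY]
  simp only [map_add, add_apply]
  abel

end LinearMap

theorem seven_mul_sq_sub_div_two (n : ℕ) :
    (7 * n ^ 2 - n) / 2 = 2 * n * (n - 1) + 3 * (n * (n + 1) / 2) := by
  rcases n with _ | m
  · rfl
  obtain ⟨k, hk⟩ := Nat.even_mul_succ_self (m + 1)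
  have hk' : ((m : ℤ) + 1) * (m + 1 + 1) = k + k := by exact_mod_cast hk
  have hdiv : (m + 1) * (m + 1 + 1) / 2 = k := by omega
  have hnum : 7 * (m + 1) ^ 2 - (m + 1) = 2 * (2 * (m + 1) * (m + 1 - 1) + 3 * k) := by
    zify [show m + 1 ≤ 7 * (m + 1) ^ 2 by nlinarith, show 1 ≤ m + 1 by omega]
    linear_combination 3 * hk'
  omega

open LinearMap LinearMap.BilinForm

section KernelParametrisation

variable {n : ℕ}

@[simp] theorem Jmap_apply (X : V n) : Jmap n X = (0, X.1) := rfl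

@[simp] theorem Ph_apply (X : V n) : Ph n X = (X.1, 0) := rfl

theorem dlt_self_ne_zero (hn : 1 ≤ n) : dlt n n ≠ 0 := fun h => by
  have h_last := congrFun h ⟨n - 1, by omega⟩
  simp only [dlt, Pi.zero_apply, ite_eq_right_iff, one_ne_zero] at h_last
  exact h_last (by omega)

/-- The blocks `(T, Σ, Q, G)` of the proof idea. -/
abbrev Tau1Params (n : ℕ) : Type :=
  vanishingRightAt ℝ (V n) (dlt n n) × symmetricSubmodule ℝ (Fin n → ℝ) ×
    symmetricSubmodule ℝ (Fin n → ℝ) × symmetricSubmodule ℝ (Fin n → ℝ)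

section Blocks

variable {B : Bil n × Bil n} (hB : B ∈ kerTau1 n)
include hB

theorem compl₂_inl_mem_vanishingRightAt :
    B.1.compl₂ (inl ℝ _ _) ∈ vanishingRightAt ℝ (V n) (dlt n n) :=
  mem_vanishingRightAt.2 hB.2.2.1

theorem compl₁₂_inr_inl_add_compl₁₂_inl_inr_mem_symmetricSubmodule :
    B.1.compl₁₂ (inr ℝ _ _) (inl ℝ _ _) + B.1.compl₁₂ (inl ℝ _ _) (inr ℝ _ _)
      ∈ symmetricSubmodule ℝ (Fin n → ℝ) := by
  refine ⟨fun x y => ?_⟩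
  have h := hB.2.1 (x, 0) (y, 0)
  simp only [Jmap_apply, Ph_apply, LinearMap.add_apply, compl₁₂_apply, coe_inr, coe_inl]
    at h ⊢
  linear_combination h

theorem compl₁₂_inr_inr_mem_symmetricSubmodule :
    B.1.compl₁₂ (inr ℝ _ _) (inr ℝ _ _) ∈ symmetricSubmodule ℝ (Fin n → ℝ) := by
  refine ⟨fun x y => ?_⟩
  have hxy := hB.2.2.2.1 (0, x) (y, 0)
  have hyx := hB.2.2.2.1 (0, y) (x, 0)
  have hsymm := hB.1 (0, x) (0, y)
  simp only [Jmap_apply, compl₁₂_apply, coe_inr] at hxy hyx ⊢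
  linear_combination hxy - hyx - hsymm

theorem compl₁₂_inl_inl_mem_symmetricSubmodule :
    B.2.compl₁₂ (inl ℝ _ _) (inl ℝ _ _) ∈ symmetricSubmodule ℝ (Fin n → ℝ) :=
  ⟨fun _ _ => hB.1 _ _⟩

end Blocks

def toTau1Params (B : kerTau1 n) : Tau1Params n :=
  (⟨_, compl₂_inl_mem_vanishingRightAt B.2⟩,
   ⟨_, compl₁₂_inr_inl_add_compl₁₂_inl_inr_mem_symmetricSubmodule B.2⟩,
   ⟨_, compl₁₂_inr_inr_mem_symmetricSubmodule B.2⟩,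
   ⟨_, compl₁₂_inl_inl_mem_symmetricSubmodule B.2⟩)

/-- The block `B_S(h_x, v_y) = Σ(x, y) - T(v_x, y)`. -/
def Tau1Params.mixedBlock (p : Tau1Params n) : LinearMap.BilinForm ℝ (Fin n → ℝ) :=
  p.2.1.1 - p.1.1 ∘ₗ inr ℝ _ _

def Tau1Params.toBil (p : Tau1Params n) : Bil n × Bil n :=
  let mixed := p.mixedBlock.compl₁₂ (fst ℝ _ _) (snd ℝ _ _)
  let vert := p.2.2.1.1.compl₁₂ (snd ℝ _ _) (snd ℝ _ _)
  (p.1.1.compl₂ (fst ℝ _ _) + mixed + vert,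
    p.2.2.2.1.compl₁₂ (fst ℝ _ _) (fst ℝ _ _) - mixed - mixed.flip - vert)

@[simp] theorem Tau1Params.mixedBlock_apply (p : Tau1Params n) (x y : Fin n → ℝ) :
    p.mixedBlock x y = p.2.1.1 x y - p.1.1 (0, x) y := rfl

@[simp] theorem Tau1Params.toBil_fst_apply (p : Tau1Params n) (X Y : V n) :
    p.toBil.1 X Y = p.1.1 X Y.1 + p.mixedBlock X.1 Y.2 + p.2.2.1.1 X.2 Y.2 := rfl

@[simp] theorem Tau1Params.toBil_snd_apply (p : Tau1Params n) (X Y : V n) :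
    p.toBil.2 X Y = p.2.2.2.1 X.1 Y.1 - p.mixedBlock X.1 Y.2 - p.mixedBlock Y.1 X.2
      - p.2.2.1.1 X.2 Y.2 := rfl

theorem Tau1Params.toBil_mem (p : Tau1Params n) : p.toBil ∈ kerTau1 n := by
  obtain ⟨⟨T, hT⟩, ⟨S, hS⟩, ⟨Q, hQ⟩, ⟨G, hG⟩⟩ := p
  rw [mem_vanishingRightAt] at hT
  refine ⟨fun X Y => ?_, fun X Y => ?_, fun X => ?_, fun X Y => ?_, fun X => ?_⟩
  · simp only [toBil_snd_apply, mixedBlock_apply, hG.eq X.1 Y.1, hQ.eq X.2 Y.2]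
    ring
  · simp only [Jmap_apply, Ph_apply, toBil_fst_apply, mixedBlock_apply, map_zero,
      LinearMap.zero_apply, add_zero, zero_add, hS.eq X.1 Y.1]
    ring
  · simp [Svec, hvec, hT]
  · simp
  · simp [Svec, hvec, Cvec, vvec, hT, hS.eq (dlt n n) X.1]

theorem toBil_toTau1Params (B : kerTau1 n) : (toTau1Params B).toBil = B := by
  obtain ⟨⟨BS, BC⟩, hB⟩ := B
  refine Prod.ext (ext fun X => ext fun Y => ?_) (ext fun X => ext fun Y => ?_)
  · simp only [toTau1Params, Tau1Params.toBil_fst_apply, Tau1Params.mixedBlock_apply,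
      compl₂_apply, compl₁₂_apply, coe_inl, coe_inr, LinearMap.add_apply, add_sub_cancel_left]
    rw [BS.apply_prod_eq_sum_blocks X Y, BS.apply_prod_eq_sum_blocks X (Y.1, 0)]
    simp only [Prod.mk_zero_zero, map_zero, add_zero, add_left_inj]
    ring
  · have hXY := hB.2.2.2.1 (X.1, 0) (Y.2, 0)
    have hYX := hB.2.2.2.1 (Y.1, 0) (X.2, 0)
    have hvert := hB.2.2.2.1 (0, X.2) (Y.2, 0)
    have hsymm := hB.1 (Y.1, 0) (0, X.2)
    simp only [Jmap_apply] at hXY hYX hvert hsymm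
    simp only [toTau1Params, Tau1Params.toBil_snd_apply, Tau1Params.mixedBlock_apply,
      compl₂_apply, compl₁₂_apply, coe_inl, coe_inr, LinearMap.add_apply, add_sub_cancel_left]
    rw [BC.apply_prod_eq_sum_blocks X Y]
    linarith

theorem toTau1Params_toBil (p : Tau1Params n) : toTau1Params ⟨p.toBil, p.toBil_mem⟩ = p := by
  ext <;> simp [toTau1Params]

def kerTau1EquivParams : kerTau1 n ≃ₗ[ℝ] Tau1Params n where
  toFun := toTau1Params
  map_add' _ _ := by ext <;> simp [toTau1Params, add_add_add_comm]
  map_smul' _ _ := by ext <;> simp [toTau1Params]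
  invFun p := ⟨p.toBil, p.toBil_mem⟩
  left_inv B := Subtype.ext (toBil_toTau1Params B)
  right_inv := toTau1Params_toBil

theorem finrank_tau1Params (hn : 1 ≤ n) :
    finrank ℝ (Tau1Params n) = 2 * n * (n - 1) + 3 * (n * (n + 1) / 2) := by
  -- instance search does not find `AddCommGroup` on submodules of spaces of bilinear maps
  let _ := addCommMonoidToAddCommGroup ℝ (M := vanishingRightAt ℝ (V n) (dlt n n))
  let _ := addCommMonoidToAddCommGroup ℝ (M := symmetricSubmodule ℝ (Fin n → ℝ))
  rw [finrank_prod, finrank_prod, finrank_prod, finrank_vanishingRightAt (dlt_self_ne_zero hn),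
    finrank_symmetricSubmodule, finrank_prod, finrank_fin_fun]
  ring

end KernelParametrisation

/-- the kernel of `τ₁` has dimension `(7n² − n)/2`. -/
theorem dim_kerTau1 (n : ℕ) (hn : 1 ≤ n) :
    Module.finrank ℝ (kerTau1 n) = (7 * n ^ 2 - n) / 2 := by
  rw [kerTau1EquivParams.finrank_eq, finrank_tau1Params hn, seven_mul_sq_sub_div_two]
end
end

section
/- The symbol of the Rapcsák operator P₁ is involutive: the basis e_1, …, e_{2n} of V given by e_j := h_j for 1 ≤ j ≤ n−1, e_n := S + v_1 + ⋯ + v_n, and e_{n+j} := v_j for 1 ≤ j ≤ n, is quasi-regular, i.e. dim g₃(P₁) = dim g₂(P₁) + Σ_{k=1}^{2n} dim g₂(P₁)_{e₁…e_k}, where g₂(P₁) is the space of symmetric bilinear forms A on V with A(X, C) = 0 and A(S, J X) = A(X, C) for all X ∈ V, g₂(P₁)_{e₁…e_k} := { A ∈ g₂(P₁) : A(e_j, X) = 0 for all X ∈ V and all 1 ≤ j ≤ k }, and g₃(P₁) is the space of symmetric trilinear forms A on V with A(X, Y, C) = 0 and A(X, S, J Y) = A(X, Y, C) for all X, Y ∈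 V. -/
set_option synthInstance.maxHeartbeats 1000000
set_option maxHeartbeats 1000000

noncomputable section

/-- Trilinearity of a function `A : V × V × V → ℝ`. -/
def IsTrilin (n : ℕ) (A : V n → V n → V n → ℝ) : Prop :=
  (∀ X X' Y Z, A (X + X') Y Z = A X Y Z + A X' Y Z) ∧
  (∀ (c : ℝ) X Y Z, A (c • X) Y Z = c * A X Y Z) ∧
  (∀ X Y Y' Z, A X (Y + Y') Z = A X Y Z + A X Y' Z) ∧
  (∀ (c : ℝ) X Y Z, A X (c • Y) Z = c * A X Y Z) ∧
  (∀ X Y Z Z', A X Y (Z + Z') = A X Y Z + A X Y Z') ∧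
  (∀ (c : ℝ) X Y Z, A X Y (c • Z) = c * A X Y Z)

theorem IsTrilin.add {n : ℕ} {a b : V n → V n → V n → ℝ}
    (ha : IsTrilin n a) (hb : IsTrilin n b) : IsTrilin n (a + b) := by
  obtain ⟨ha1, ha2, ha3, ha4, ha5, ha6⟩ := ha
  obtain ⟨hb1, hb2, hb3, hb4, hb5, hb6⟩ := hb
  refine ⟨fun X X' Y Z => ?_, fun c X Y Z => ?_, fun X Y Y' Z => ?_,
    fun c X Y Z => ?_, fun X Y Z Z' => ?_, fun c X Y Z => ?_⟩ <;>
      simp only [Pi.add_apply]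
  · linear_combination ha1 X X' Y Z + hb1 X X' Y Z
  · linear_combination ha2 c X Y Z + hb2 c X Y Z
  · linear_combination ha3 X Y Y' Z + hb3 X Y Y' Z
  · linear_combination ha4 c X Y Z + hb4 c X Y Z
  · linear_combination ha5 X Y Z Z' + hb5 X Y Z Z'
  · linear_combination ha6 c X Y Z + hb6 c X Y Z

theorem IsTrilin.smul {n : ℕ} (c : ℝ) {a : V n → V n → V n → ℝ}
    (ha : IsTrilin n a) : IsTrilin n (c • a) := by
  obtain ⟨ha1, ha2, ha3, ha4, ha5, ha6⟩ := ha
  refine ⟨fun X X' Y Z => ?_, fun d X Y Z => ?_, fun X Y Y' Z => ?_,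
    fun d X Y Z => ?_, fun X Y Z Z' => ?_, fun d X Y Z => ?_⟩ <;>
      simp only [Pi.smul_apply, smul_eq_mul]
  · linear_combination c * ha1 X X' Y Z
  · linear_combination c * ha2 d X Y Z
  · linear_combination c * ha3 X Y Y' Z
  · linear_combination c * ha4 d X Y Z
  · linear_combination c * ha5 X Y Z Z'
  · linear_combination c * ha6 d X Y Z

theorem IsTrilin.zero (n : ℕ) : IsTrilin n (0 : V n → V n → V n → ℝ) := by
  refine ⟨fun X X' Y Z => by simp, fun c X Y Z => by simp, fun X Y Y' Z => by simp,
    fun c X Y Z => by simp, fun X Y Z Z' => by simp, fun c X Y Z => by simp⟩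

/-- The kernel `g₃(P₁)` of the prolonged symbol of the Rapcsák operator: symmetric
trilinear forms `A` on `V` with `A(X, Y, C) = 0` and `A(X, S, J Y) = A(X, Y, C)`. -/
def g3P1 (n : ℕ) : Submodule ℝ (V n → V n → V n → ℝ) where
  carrier := {A | IsTrilin n A ∧
    (∀ X Y Z, A X Y Z = A Y X Z) ∧ (∀ X Y Z, A X Y Z = A X Z Y) ∧
    (∀ X Y, A X Y (Cvec n) = 0) ∧
    (∀ X Y, A X (Svec n) (Jmap n Y) = A X Y (Cvec n))}
  add_mem' := by
    rintro a b ⟨haT, ha1, ha2, ha3, ha4⟩ ⟨hbT, hb1, hb2, hb3, hb4⟩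
    refine ⟨haT.add hbT, fun X Y Z => ?_, fun X Y Z => ?_, fun X Y => ?_,
      fun X Y => ?_⟩ <;> simp only [Pi.add_apply]
    · linear_combination ha1 X Y Z + hb1 X Y Z
    · linear_combination ha2 X Y Z + hb2 X Y Z
    · linear_combination ha3 X Y + hb3 X Y
    · linear_combination ha4 X Y + hb4 X Y
  zero_mem' := ⟨IsTrilin.zero n, fun X Y Z => by simp, fun X Y Z => by simp,
    fun X Y => by simp, fun X Y => by simp⟩
  smul_mem' := by
    rintro c a ⟨haT, ha1, ha2, ha3, ha4⟩
    refine ⟨haT.smul c, fun X Y Z => ?_, fun X Y Z => ?_, fun X Y => ?_,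
      fun X Y => ?_⟩ <;> simp only [Pi.smul_apply, smul_eq_mul]
    · linear_combination c * ha1 X Y Z
    · linear_combination c * ha2 X Y Z
    · linear_combination c * ha3 X Y
    · linear_combination c * ha4 X Y

/-- The basis vectors `e_1, …, e_{2n}` (1-indexed): `e_j = h_j` for `j < n`,
`e_n = S + v_1 + ⋯ + v_n`, and `e_{n+j} = v_j`. -/
def evec (n j : ℕ) : V n :=
  if j < n then hvec n j
  else if j = n then Svec n + ∑ i ∈ Finset.Icc 1 n, vvec n i
  else vvec n (j - n)

/-- The subspace `g₂(P₁)_{e₁…e_k}` of `g₂(P₁)` of forms annihilating `e_1, …, e_k`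
in the first argument. -/
def g2P1e (n k : ℕ) : Submodule ℝ (Bil n) where
  carrier := {A | (∀ X Y, A X Y = A Y X) ∧ (∀ X, A X (Cvec n) = 0) ∧
    (∀ X, A (Svec n) (Jmap n X) = A X (Cvec n)) ∧
    (∀ j, 1 ≤ j → j ≤ k → ∀ X, A (evec n j) X = 0)}
  add_mem' := by
    rintro a b ⟨ha1, ha2, ha3, ha4⟩ ⟨hb1, hb2, hb3, hb4⟩
    refine ⟨fun X Y => ?_, fun X => ?_, fun X => ?_, fun j hj1 hj2 X => ?_⟩ <;>
      simp only [LinearMap.add_apply]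
    · linear_combination ha1 X Y + hb1 X Y
    · linear_combination ha2 X + hb2 X
    · linear_combination ha3 X + hb3 X
    · linear_combination ha4 j hj1 hj2 X + hb4 j hj1 hj2 X
  zero_mem' := ⟨fun X Y => by simp, fun X => by simp, fun X => by simp,
    fun j hj1 hj2 X => by simp⟩
  smul_mem' := by
    rintro c a ⟨ha1, ha2, ha3, ha4⟩
    refine ⟨fun X Y => ?_, fun X => ?_, fun X => ?_, fun j hj1 hj2 X => ?_⟩ <;>
      simp only [LinearMap.smul_apply, smul_eq_mul]
    · linear_combination c * ha1 X Y
    · linear_combination c * ha2 X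
    · linear_combination c * ha3 X
    · linear_combination c * ha4 j hj1 hj2 X


/-
Cartan's test, made explicit. Let `G_k = g3P1e n k` be the forms of `g₃(P₁)` annihilating
`e_1, …, e_k`. Slicing `A ↦ A(e_{k+1}, ·, ·)` maps `G_k` into `g₂(P₁)_{e₁…e_k}` with kernel
`G_{k+1}`, and `G_{2n} = 0`; by rank–nullity and telescoping, quasi-regularity is the
surjectivity of every slicing. A preimage of `B` is written down explicitly:
* for `e_k = h_k` (`k < n`), the symmetric primitive of `B` along the coordinate `x^k`;
* for `e_n`, the form `B(S, S) (x^n)³` plus a cubic in `y^1, …, y^{n-1}`;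
* for `e_{n+k} = v_k` (`k < n`), a cubic in the coordinates `y^j - y^k` (`k < j < n`).
These coordinates vanish on `S`, `C`, `e_n` and the earlier `v_j`, so every condition except
the contraction with the new basis vector holds termwise, and that contraction is an explicit
symmetric solution of `∑ₜ Uₜᵤᵣ = Mᵤᵣ`. Finally `g₂(P₁)_{e₁…e_{2n-1}} = 0`.
-/

open Finset Module

lemma Submodule.finrank_eq_finrank_map_add_finrank_inf_ker {K M N : Type*} [DivisionRing K]
    [AddCommGroup M] [Module K M] [AddCommGroup N] [Module K N] (p : Submodule K M)
    [FiniteDimensional K p] (f : M →ₗ[K] N) :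
    finrank K p = finrank K (p.map f) + finrank K ↥(p ⊓ LinearMap.ker f) := by
  have hker : (p ⊓ LinearMap.ker f).comap p.subtype = LinearMap.ker (f.domRestrict p) := by
    rw [LinearMap.ker_domRestrict, Submodule.comap_inf, Submodule.comap_subtype_self,
      top_inf_eq]
  rw [← (f.domRestrict p).finrank_range_add_finrank_ker, LinearMap.range_domRestrict,
    ← hker, (Submodule.comapSubtypeEquivOfLe inf_le_left).finrank_eq]

lemma Nat.eq_sum_range_add_of_eq_add_succ {f g : ℕ → ℕ} {N : ℕ}
    (h : ∀ k < N, f k = g k + f (k + 1)) : f 0 = ∑ k ∈ range N, g k + f N := by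
  induction N with
  | zero => simp
  | succ N ih => rw [ih fun k hk => h k (by omega), h N (by omega), sum_range_succ, add_assoc]

namespace RapcsakSymbol

section Coordinates

variable {n : ℕ}

def hBasis (i : Fin n) : V n := (Pi.single i 1, 0)

def vBasis (i : Fin n) : V n := (0, Pi.single i 1)

def xCoord (i : Fin n) : V n →ₗ[ℝ] ℝ := (LinearMap.proj i).comp (LinearMap.fst ℝ _ _)

def yCoord (i : Fin n) : V n →ₗ[ℝ] ℝ := (LinearMap.proj i).comp (LinearMap.snd ℝ _ _)

@[simp] lemma xCoord_apply (i : Fin n) (X : V n) : xCoord i X = X.1 i := rfl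
@[simp] lemma yCoord_apply (i : Fin n) (X : V n) : yCoord i X = X.2 i := rfl
@[simp] lemma hBasis_fst (i : Fin n) : (hBasis i).1 = Pi.single i 1 := rfl
@[simp] lemma hBasis_snd (i : Fin n) : (hBasis i).2 = 0 := rfl
@[simp] lemma vBasis_fst (i : Fin n) : (vBasis i).1 = 0 := rfl
@[simp] lemma vBasis_snd (i : Fin n) : (vBasis i).2 = Pi.single i 1 := rfl
@[simp] lemma Jmap_apply (X : V n) : Jmap n X = (0, X.1) := rfl

lemma Jmap_hBasis (i : Fin n) : Jmap n (hBasis i) = vBasis i := rfl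

lemma dlt_succ (i : Fin n) : dlt n (i + 1) = Pi.single i 1 := by
  ext j
  simp [dlt, Pi.single_apply, Fin.ext_iff]

lemma hvec_succ (i : Fin n) : hvec n (i + 1) = hBasis i := by
  rw [hvec, dlt_succ]; rfl

lemma vvec_succ (i : Fin n) : vvec n (i + 1) = vBasis i := by
  rw [vvec, dlt_succ]; rfl

lemma eq_sum_basis (X : V n) : X = ∑ i, X.1 i • hBasis i + ∑ i, X.2 i • vBasis i := by
  ext j <;> simp [hBasis, vBasis, Prod.fst_sum, Prod.snd_sum, Finset.sum_apply, Pi.single_apply]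

lemma map_eq_sum_basis {M : Type*} [AddCommGroup M] [Module ℝ M] (f : V n →ₗ[ℝ] M)
    (X : V n) : f X = ∑ i, X.1 i • f (hBasis i) + ∑ i, X.2 i • f (vBasis i) := by
  conv_lhs => rw [eq_sum_basis X]
  simp [map_sum]

end Coordinates

section AdaptedBasis

variable {m : ℕ}

lemma Svec_eq : Svec (m + 1) = hBasis (Fin.last m) := hvec_succ (Fin.last m)

lemma Cvec_eq : Cvec (m + 1) = vBasis (Fin.last m) := vvec_succ (Fin.last m)

lemma evec_castSucc (i : Fin m) : evec (m + 1) (i + 1) = hBasis i.castSucc := by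
  rw [evec, if_pos (by omega), ← hvec_succ]; rfl

lemma evec_self : evec (m + 1) (m + 1) = Svec (m + 1) + ∑ i, vBasis i := by
  rw [evec, if_neg (by omega), if_pos rfl]
  congr 1
  ext j <;> simp [vvec, dlt, vBasis, Prod.fst_sum, Prod.snd_sum, Finset.sum_apply,
    Pi.single_apply, Fin.is_le]

@[simp] lemma evec_self_fst : (evec (m + 1) (m + 1)).1 = Pi.single (Fin.last m) 1 := by
  simp [evec_self, Svec_eq, Prod.fst_sum]

@[simp] lemma evec_self_snd : (evec (m + 1) (m + 1)).2 = 1 := by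
  ext j
  simp [evec_self, Svec_eq, Prod.snd_sum, Finset.sum_apply, Pi.single_apply]

lemma evec_vBasis (i : Fin (m + 1)) : evec (m + 1) (m + 1 + i + 1) = vBasis i := by
  rw [evec, if_neg (by omega), if_neg (by omega), ← vvec_succ]
  congr 1; omega

lemma eq_zero_of_evec {M : Type*} [AddCommGroup M] [Module ℝ M] {f : V (m + 1) →ₗ[ℝ] M}
    (hf : ∀ j, 1 ≤ j → j ≤ 2 * (m + 1) → f (evec (m + 1) j) = 0) : f = 0 := by
  have hv (i : Fin (m + 1)) : f (vBasis i) = 0 := by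
    rw [← evec_vBasis]; exact hf _ (by omega) (by omega)
  have hh (i : Fin (m + 1)) : f (hBasis i) = 0 := by
    induction i using Fin.lastCases with
    | last =>
      have := hf (m + 1) (by omega) (by omega)
      rwa [evec_self, map_add, map_sum, sum_eq_zero fun i _ => hv i, add_zero, Svec_eq] at this
    | cast i => rw [← evec_castSucc]; exact hf _ (by omega) (by omega)
  ext i
  exacts [hh i, hv i]

lemma forall_apply_evec_eq_zero {β : Type*} [Zero β] {F : V (m + 1) → β} {k : ℕ}
    (hk : k ≤ 2 * (m + 1))
    (hh : ∀ t : Fin m, (t : ℕ) < k → F (hBasis t.castSucc) = 0)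
    (hs : m < k → F (evec (m + 1) (m + 1)) = 0)
    (hv : ∀ t : Fin (m + 1), m + 1 + (t : ℕ) < k → F (vBasis t) = 0) :
    ∀ j, 1 ≤ j → j ≤ k → F (evec (m + 1) j) = 0 := by
  intro j hj1 hj2
  obtain hj | rfl | hj := lt_trichotomy j (m + 1)
  · obtain ⟨t, rfl⟩ : ∃ t : Fin m, j = t + 1 := ⟨⟨j - 1, by omega⟩, (by omega : j = j - 1 + 1)⟩
    rw [evec_castSucc]; exact hh t (by omega)
  · exact hs (by omega)
  · obtain ⟨t, rfl⟩ : ∃ t : Fin (m + 1), j = m + 1 + t + 1 :=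
      ⟨⟨j - m - 2, by omega⟩, (by omega : j = m + 1 + (j - m - 2) + 1)⟩
    rw [evec_vBasis]; exact hv t (by omega)

lemma map_eq_of_map_hBasis_castSucc {M : Type*} [AddCommGroup M] [Module ℝ M]
    {f : V (m + 1) →ₗ[ℝ] M} (hh : ∀ t : Fin m, f (hBasis t.castSucc) = 0)
    (hC : f (Cvec (m + 1)) = 0) (X : V (m + 1)) :
    f X = X.1 (Fin.last m) • f (Svec (m + 1)) +
      ∑ t : Fin m, X.2 t.castSucc • f (vBasis t.castSucc) := by
  simp [map_eq_sum_basis f X, Fin.sum_univ_castSucc, hh, ← Cvec_eq, hC, Svec_eq]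

end AdaptedBasis

section Filtration

variable {n : ℕ}

def IsTrilin.curry {A : V n → V n → V n → ℝ} (hA : IsTrilin n A) :
    V n →ₗ[ℝ] (V n → V n → ℝ) where
  toFun := A
  map_add' X X' := funext₂ (hA.1 X X')
  map_smul' c X := funext₂ (hA.2.1 c X)

def IsTrilin.slice {A : V n → V n → V n → ℝ} (hA : IsTrilin n A) (X : V n) : Bil n :=
  LinearMap.mk₂ ℝ (A X) (hA.2.2.1 X) (fun c Y Z => hA.2.2.2.1 c X Y Z)
    (hA.2.2.2.2.1 X) (fun c Y Z => hA.2.2.2.2.2 c X Y Z)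

@[simp] lemma IsTrilin.slice_apply {A : V n → V n → V n → ℝ} (hA : IsTrilin n A)
    (X Y Z : V n) : IsTrilin.slice hA X Y Z = A X Y Z := rfl

def g3P1BasisSlices (n : ℕ) : g3P1 n →ₗ[ℝ] (Fin n ⊕ Fin n → Bil n) where
  toFun A i := IsTrilin.slice A.2.1 (Sum.elim hBasis vBasis i)
  map_add' _ _ := rfl
  map_smul' _ _ := rfl

instance : FiniteDimensional ℝ (g3P1 n) := by
  refine FiniteDimensional.of_injective (V₂ := Fin n ⊕ Fin n → Bil n) (g3P1BasisSlices n)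
    fun A A' h => Subtype.ext ?_
  have : IsTrilin.curry A.2.1 = IsTrilin.curry A'.2.1 := by
    ext i Y Z
    · exact congr($h (Sum.inl i) Y Z)
    · exact congr($h (Sum.inr i) Y Z)
  exact congr(⇑$this)

def bilToFun (n : ℕ) : Bil n →ₗ[ℝ] (V n → V n → ℝ) where
  toFun B X Y := B X Y
  map_add' _ _ := rfl
  map_smul' _ _ := rfl

lemma bilToFun_injective : Function.Injective (bilToFun n) := fun _ _ h =>
  LinearMap.ext₂ fun X Y => congr($h X Y)

def g3P1e (n k : ℕ) : Submodule ℝ (V n → V n → V n → ℝ) :=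
  g3P1 n ⊓ ⨅ (j) (_ : 1 ≤ j) (_ : j ≤ k), LinearMap.ker (LinearMap.proj (evec n j))

lemma mem_g3P1e {k : ℕ} {A : V n → V n → V n → ℝ} :
    A ∈ g3P1e n k ↔ A ∈ g3P1 n ∧ ∀ j, 1 ≤ j → j ≤ k → A (evec n j) = 0 := by
  simp [g3P1e, Submodule.mem_iInf]

lemma g3P1e_zero : g3P1e n 0 = g3P1 n := by
  ext A
  exact ⟨fun h => (mem_g3P1e.1 h).1, fun h => mem_g3P1e.2 ⟨h, by omega⟩⟩

lemma g2P1e_zero : g2P1e n 0 = g2P1 n := by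
  ext A
  exact ⟨fun ⟨h₁, h₂, h₃, _⟩ => ⟨h₁, h₂, h₃⟩, fun ⟨h₁, h₂, h₃⟩ => ⟨h₁, h₂, h₃, by omega⟩⟩

lemma g3P1e_inf_ker (k : ℕ) :
    g3P1e n k ⊓ LinearMap.ker (LinearMap.proj (evec n (k + 1))) = g3P1e n (k + 1) := by
  ext A
  simp only [Submodule.mem_inf, mem_g3P1e, LinearMap.mem_ker, LinearMap.proj_apply]
  refine ⟨fun ⟨⟨hA, hk⟩, hk1⟩ => ⟨hA, fun j hj1 hj2 => ?_⟩,
    fun ⟨hA, hk⟩ => ⟨⟨hA, fun j hj1 hj2 => hk j hj1 (by omega)⟩, hk _ (by omega) le_rfl⟩⟩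
  obtain hj | rfl := Nat.lt_or_eq_of_le hj2
  exacts [hk j hj1 (by omega), hk1]

lemma map_g3P1e_le (k : ℕ) :
    (g3P1e n k).map (LinearMap.proj (evec n (k + 1))) ≤ (g2P1e n k).map (bilToFun n) := by
  rintro _ ⟨A, hA, rfl⟩
  obtain ⟨⟨hlin, h₁₂, h₂₃, hC, hS⟩, hann⟩ := mem_g3P1e.1 hA
  refine ⟨IsTrilin.slice hlin (evec n (k + 1)), ⟨fun X Y => h₂₃ _ X Y, fun X => hC _ X,
    fun X => hS _ X, fun j hj1 hj2 X => ?_⟩, rfl⟩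
  rw [IsTrilin.slice_apply, h₁₂, hann j hj1 hj2]
  rfl

lemma finrank_g3P1e_eq_add (k : ℕ)
    (hsurj : (g2P1e n k).map (bilToFun n) ≤
      (g3P1e n k).map (LinearMap.proj (evec n (k + 1)))) :
    finrank ℝ (g3P1e n k) = finrank ℝ (g2P1e n k) + finrank ℝ (g3P1e n (k + 1)) := by
  have : FiniteDimensional ℝ (g3P1e n k) := Submodule.finiteDimensional_of_le inf_le_left
  rw [(g3P1e n k).finrank_eq_finrank_map_add_finrank_inf_ker (LinearMap.proj _),
    g3P1e_inf_ker, le_antisymm (map_g3P1e_le k) hsurj,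
    (Submodule.equivMapOfInjective _ bilToFun_injective _).finrank_eq.symm]

lemma g3P1e_top_eq_bot {m : ℕ} : g3P1e (m + 1) (2 * (m + 1)) = ⊥ := by
  refine eq_bot_iff.2 fun A hA => ?_
  obtain ⟨⟨hlin, -⟩, hann⟩ := mem_g3P1e.1 hA
  have h0 : IsTrilin.curry hlin = 0 := eq_zero_of_evec hann
  exact congr(⇑$h0)

lemma g2P1e_top_eq_bot {m : ℕ} : g2P1e (m + 1) (2 * (m + 1)) = ⊥ :=
  eq_bot_iff.2 fun _ ⟨_, _, _, hann⟩ =>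
    eq_zero_of_evec fun j hj1 hj2 => LinearMap.ext (hann j hj1 hj2)

end Filtration

section Cubic

variable {n : ℕ} {ι : Type*}

def cubicForm (s : Finset ι) (U : ι → ι → ι → ℝ) (w : ι → V n →ₗ[ℝ] ℝ) :
    V n → V n → V n → ℝ := fun X Y Z =>
  ∑ t ∈ s, ∑ u ∈ s, ∑ r ∈ s, U t u r * w t X * w u Y * w r Z

variable {s : Finset ι} {U : ι → ι → ι → ℝ} {w : ι → V n →ₗ[ℝ] ℝ}

lemma isTrilin_cubicForm : IsTrilin n (cubicForm s U w) := by
  refine ⟨?_, ?_, ?_, ?_, ?_, ?_⟩ <;> intros <;>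
    simp only [cubicForm, map_add, map_smul, smul_eq_mul, ← sum_add_distrib, mul_sum] <;>
    exact sum_congr rfl fun _ _ => sum_congr rfl fun _ _ => sum_congr rfl fun _ _ => by ring

lemma cubicForm_comm₁₂ (hU : ∀ t u r, U t u r = U u t r) (X Y Z : V n) :
    cubicForm s U w X Y Z = cubicForm s U w Y X Z := by
  rw [cubicForm, sum_comm]
  exact sum_congr rfl fun _ _ => sum_congr rfl fun _ _ => sum_congr rfl fun _ _ => by
    rw [hU]; ring

lemma cubicForm_comm₂₃ (hU : ∀ t u r, U t u r = U t r u) (X Y Z : V n) :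
    cubicForm s U w X Y Z = cubicForm s U w X Z Y := by
  refine sum_congr rfl fun _ _ => ?_
  rw [sum_comm]
  exact sum_congr rfl fun _ _ => sum_congr rfl fun _ _ => by rw [hU]; ring

lemma cubicForm_eq_zero_left {x : V n} (hx : ∀ t ∈ s, w t x = 0) (Y Z : V n) :
    cubicForm s U w x Y Z = 0 :=
  sum_eq_zero fun t ht => by simp [hx t ht]

lemma cubicForm_eq_zero_mid {y : V n} (hy : ∀ u ∈ s, w u y = 0) (X Z : V n) :
    cubicForm s U w X y Z = 0 :=
  sum_eq_zero fun _ _ => sum_eq_zero fun u hu => by simp [hy u hu]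

lemma cubicForm_eq_zero_right {z : V n} (hz : ∀ r ∈ s, w r z = 0) (X Y : V n) :
    cubicForm s U w X Y z = 0 :=
  sum_eq_zero fun _ _ => sum_eq_zero fun _ _ => sum_eq_zero fun r hr => by simp [hz r hr]

lemma cubicForm_mem_g3P1 (hU₁ : ∀ t u r, U t u r = U u t r) (hU₂ : ∀ t u r, U t u r = U t r u)
    (hC : ∀ r ∈ s, w r (Cvec n) = 0)
    (hS : ∀ X Y, cubicForm s U w X (Svec n) (Jmap n Y) = 0) : cubicForm s U w ∈ g3P1 n :=
  ⟨isTrilin_cubicForm, cubicForm_comm₁₂ hU₁, cubicForm_comm₂₃ hU₂,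
    cubicForm_eq_zero_right hC, fun X Y => by rw [hS, cubicForm_eq_zero_right hC]⟩

/-- For symmetric `M` and nonempty `s`, a symmetric solution of `∑ t ∈ s, U t u r = M u r`,
by inclusion–exclusion: symmetrising `M ⊗ 1/#s` overshoots by the row-sum terms, and removing
those overshoots by the total-sum term. -/
def tensorPrimitive (s : Finset ι) (M : ι → ι → ℝ) (t u r : ι) : ℝ :=
  (M t u + M u r + M t r) / #s
    - (∑ l ∈ s, M t l + ∑ l ∈ s, M u l + ∑ l ∈ s, M r l) / #s ^ 2
    + (∑ a ∈ s, ∑ l ∈ s, M a l) / #s ^ 3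

variable {M : ι → ι → ℝ}

lemma tensorPrimitive_comm₁₂ (hM : ∀ a b, M a b = M b a) (t u r : ι) :
    tensorPrimitive s M t u r = tensorPrimitive s M u t r := by
  simp only [tensorPrimitive, hM t u]; ring

lemma tensorPrimitive_comm₂₃ (hM : ∀ a b, M a b = M b a) (t u r : ι) :
    tensorPrimitive s M t u r = tensorPrimitive s M t r u := by
  simp only [tensorPrimitive, hM u r]; ring

lemma sum_tensorPrimitive (hM : ∀ a b, M a b = M b a) (hs : s.Nonempty) (u r : ι) :
    ∑ t ∈ s, tensorPrimitive s M t u r = M u r := by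
  have hc : (#s : ℝ) ≠ 0 := by exact_mod_cast hs.card_pos.ne'
  simp only [tensorPrimitive, sum_add_distrib, sum_sub_distrib, ← sum_div, sum_const,
    nsmul_eq_mul]
  rw [sum_congr rfl fun t _ => hM t u, sum_congr rfl fun t _ => hM t r]
  field_simp
  ring

lemma cubicForm_tensorPrimitive_apply (hM : ∀ a b, M a b = M b a) {e : V n} {c : ℝ}
    (he : ∀ t ∈ s, w t e = c) (Y Z : V n) :
    cubicForm s (tensorPrimitive s M) w e Y Z =
      c * ∑ u ∈ s, ∑ r ∈ s, M u r * w u Y * w r Z := by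
  simp only [cubicForm, mul_sum]
  rw [sum_comm]
  refine sum_congr rfl fun u hu => ?_
  rw [sum_comm]
  refine sum_congr rfl fun r _ => ?_
  rw [← sum_tensorPrimitive hM ⟨u, hu⟩ u r]
  simp only [sum_mul, mul_sum]
  exact sum_congr rfl fun t ht => by rw [he t ht]; ring

end Cubic

section Primitive

variable {n : ℕ} (ε : V n →ₗ[ℝ] ℝ) (e : V n) (B : Bil n)

/-- For `ε e = 1`: the symmetric trilinear form that contracts with `e` to `B` and
vanishes on `ker ε`. -/
def primitive : V n → V n → V n → ℝ := fun X Y Z =>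
  ε X * B Y Z + ε Y * B X Z + ε Z * B X Y - ε X * ε Y * B e Z - ε Y * ε Z * B e X
    - ε X * ε Z * B e Y + ε X * ε Y * ε Z * B e e

lemma isTrilin_primitive : IsTrilin n (primitive ε e B) := by
  refine ⟨?_, ?_, ?_, ?_, ?_, ?_⟩ <;> intros <;>
    simp only [primitive, map_add, map_smul, LinearMap.add_apply, LinearMap.smul_apply,
      smul_eq_mul] <;> ring

variable {ε e B}

lemma primitive_comm₁₂ (hB : ∀ X Y, B X Y = B Y X) (X Y Z : V n) :
    primitive ε e B X Y Z = primitive ε e B Y X Z := by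
  simp only [primitive]; linear_combination ε Z * hB X Y

lemma primitive_comm₂₃ (hB : ∀ X Y, B X Y = B Y X) (X Y Z : V n) :
    primitive ε e B X Y Z = primitive ε e B X Z Y := by
  simp only [primitive]; linear_combination ε X * hB Y Z

lemma primitive_self (he : ε e = 1) (Y Z : V n) : primitive ε e B e Y Z = B Y Z := by
  simp only [primitive, he]; ring

lemma primitive_eq_zero_right {z : V n} (hz : ε z = 0) (hBz : ∀ X, B X z = 0) (X Y : V n) :
    primitive ε e B X Y z = 0 := by
  simp only [primitive, hz, hBz]; ring

lemma primitive_eq_zero_mid_right {y z : V n} (hy : ε y = 0) (hz : ε z = 0) (hyz : B y z = 0)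
    (X : V n) : primitive ε e B X y z = 0 := by
  simp only [primitive, hy, hz, hyz]; ring

lemma primitive_mem_g3P1 (hB : ∀ X Y, B X Y = B Y X) (hεC : ε (Cvec n) = 0)
    (hBC : ∀ X, B X (Cvec n) = 0) (hεS : ε (Svec n) = 0) (hεJ : ∀ Y, ε (Jmap n Y) = 0)
    (hBS : ∀ Y, B (Svec n) (Jmap n Y) = 0) : primitive ε e B ∈ g3P1 n :=
  ⟨isTrilin_primitive ε e B, primitive_comm₁₂ hB, primitive_comm₂₃ hB,
    primitive_eq_zero_right hεC hBC, fun X Y => by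
      rw [primitive_eq_zero_mid_right hεS (hεJ Y) (hBS Y), primitive_eq_zero_right hεC hBC]⟩

end Primitive

section Expansion

variable {m k : ℕ} {B : Bil (m + 1)}

lemma apply_Cvec_of_mem_g2P1e {n : ℕ} {B : Bil n} (hB : B ∈ g2P1e n k) : B (Cvec n) = 0 :=
  LinearMap.ext fun X => by rw [LinearMap.zero_apply, hB.1, hB.2.1]

lemma apply_Svec_vBasis_of_mem_g2P1e {n : ℕ} {B : Bil n} (hB : B ∈ g2P1e n k) (t : Fin n) :
    B (Svec n) (vBasis t) = 0 := by
  rw [← Jmap_hBasis, hB.2.2.1, hB.2.1]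

lemma apply_hBasis_of_mem_g2P1e (hB : B ∈ g2P1e (m + 1) k) {t : Fin m} (ht : (t : ℕ) < k) :
    B (hBasis t.castSucc) = 0 :=
  LinearMap.ext fun X => by
    rw [LinearMap.zero_apply, ← evec_castSucc]; exact hB.2.2.2 _ (by omega) ht X

lemma apply_vBasis_of_mem_g2P1e (hB : B ∈ g2P1e (m + 1) k) {t : Fin (m + 1)}
    (ht : m + 1 + (t : ℕ) < k) : B (vBasis t) = 0 :=
  LinearMap.ext fun X => by
    rw [LinearMap.zero_apply, ← evec_vBasis]; exact hB.2.2.2 _ (by omega) ht X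

lemma apply_evec_self_of_mem_g2P1e (hB : B ∈ g2P1e (m + 1) k) (hk : m < k) :
    B (evec (m + 1) (m + 1)) = 0 :=
  LinearMap.ext (hB.2.2.2 _ (by omega) hk)

lemma apply_eq_of_mem_g2P1e_mid (hB : B ∈ g2P1e (m + 1) m) (Y Z : V (m + 1)) :
    B Y Z = B (Svec _) (Svec _) * Y.1 (Fin.last m) * Z.1 (Fin.last m) +
      ∑ u : Fin m, ∑ r : Fin m,
        B (vBasis u.castSucc) (vBasis r.castSucc) * Y.2 u.castSucc * Z.2 r.castSucc := by
  have hexp (X : V (m + 1)) := map_eq_of_map_hBasis_castSucc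
    (fun t => apply_hBasis_of_mem_g2P1e hB t.isLt) (apply_Cvec_of_mem_g2P1e hB) X
  have hS : B (Svec _) Z = B (Svec _) (Svec _) * Z.1 (Fin.last m) := by
    rw [hB.1, hexp Z]
    simp [hB.1 (vBasis _) (Svec _), apply_Svec_vBasis_of_mem_g2P1e hB, mul_comm]
  have hv (t : Fin m) : B (vBasis t.castSucc) Z =
      ∑ r : Fin m, B (vBasis t.castSucc) (vBasis r.castSucc) * Z.2 r.castSucc := by
    rw [hB.1, hexp Z]
    simp only [LinearMap.add_apply, LinearMap.smul_apply, LinearMap.sum_apply, smul_eq_mul,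
      apply_Svec_vBasis_of_mem_g2P1e hB, mul_zero, zero_add]
    exact sum_congr rfl fun r _ => by rw [mul_comm, hB.1]
  rw [hexp Y]
  simp only [LinearMap.add_apply, LinearMap.smul_apply, LinearMap.sum_apply, smul_eq_mul, hS,
    hv, mul_sum]
  congr 1
  · ring
  · exact sum_congr rfl fun _ _ => sum_congr rfl fun _ _ => by ring

def yDiff (i t : Fin m) : V (m + 1) →ₗ[ℝ] ℝ := yCoord t.castSucc - yCoord i.castSucc

@[simp] lemma yDiff_apply (i t : Fin m) (X : V (m + 1)) :
    yDiff i t X = X.2 t.castSucc - X.2 i.castSucc := rfl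

lemma apply_eq_sum_Ioi_of_mem_g2P1e (i : Fin m) (hB : B ∈ g2P1e (m + 1) (m + 1 + i))
    (X Z : V (m + 1)) : B X Z = ∑ t ∈ Ioi i, yDiff i t X * B (vBasis t.castSucc) Z := by
  have hexp := map_eq_of_map_hBasis_castSucc
    (fun t => apply_hBasis_of_mem_g2P1e hB (by omega)) (apply_Cvec_of_mem_g2P1e hB)
  have hrow := apply_evec_self_of_mem_g2P1e hB (by omega)
  rw [evec_self, map_add, map_sum, Fin.sum_univ_castSucc, ← Cvec_eq,
    apply_Cvec_of_mem_g2P1e hB, add_zero] at hrow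
  have hBS : B (Svec (m + 1)) = 0 := by
    have hSS : B (Svec (m + 1)) (Svec (m + 1)) = 0 := by
      simpa [hB.1 (vBasis _) (Svec _), apply_Svec_vBasis_of_mem_g2P1e hB]
        using LinearMap.congr_fun hrow (Svec (m + 1))
    refine LinearMap.ext fun X => ?_
    rw [LinearMap.zero_apply, hB.1, hexp X]
    simp [hSS, hB.1 (vBasis _) (Svec _), apply_Svec_vBasis_of_mem_g2P1e hB]
  have hsum : ∑ t : Fin m, B (vBasis t.castSucc) Z = 0 := by
    simpa [hBS] using LinearMap.congr_fun hrow Z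
  have hall : B X Z = ∑ t : Fin m, yDiff i t X * B (vBasis t.castSucc) Z := by
    simp [hexp X, hBS, sub_mul, sum_sub_distrib, ← mul_sum, hsum]
  rw [hall]
  refine (sum_subset (subset_univ _) fun t _ ht => ?_).symm
  obtain ht | rfl := lt_or_eq_of_le (not_lt.1 (mem_Ioi.not.1 ht))
  · rw [apply_vBasis_of_mem_g2P1e hB (by simpa using ht), LinearMap.zero_apply, mul_zero]
  · simp

lemma apply_eq_of_mem_g2P1e_vertical (i : Fin m) (hB : B ∈ g2P1e (m + 1) (m + 1 + i))
    (Y Z : V (m + 1)) :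
    B Y Z = ∑ u ∈ Ioi i, ∑ r ∈ Ioi i,
      B (vBasis u.castSucc) (vBasis r.castSucc) * yDiff i u Y * yDiff i r Z := by
  have hv (u : Fin m) : B (vBasis u.castSucc) Z =
      ∑ r ∈ Ioi i, yDiff i r Z * B (vBasis u.castSucc) (vBasis r.castSucc) := by
    rw [hB.1, apply_eq_sum_Ioi_of_mem_g2P1e i hB Z]
    exact sum_congr rfl fun r _ => by rw [hB.1]
  rw [apply_eq_sum_Ioi_of_mem_g2P1e i hB Y]
  simp only [hv, mul_sum]
  exact sum_congr rfl fun _ _ => sum_congr rfl fun _ _ => by ring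

end Expansion

section Prolongation

variable {m k : ℕ} {B : Bil (m + 1)}

lemma mem_map_of_exists
    (h : ∃ A ∈ g3P1e (m + 1) k, ∀ Y Z, A (evec (m + 1) (k + 1)) Y Z = B Y Z) :
    bilToFun (m + 1) B ∈ (g3P1e (m + 1) k).map (LinearMap.proj (evec (m + 1) (k + 1))) :=
  let ⟨A, hA, hAB⟩ := h
  ⟨A, hA, funext₂ hAB⟩

lemma exists_prolongation_horizontal (i : Fin m) (hB : B ∈ g2P1e (m + 1) i) :
    ∃ A ∈ g3P1e (m + 1) i, ∀ Y Z, A (evec (m + 1) (i + 1)) Y Z = B Y Z := by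
  have hsymm : ∀ X Y, B X Y = B Y X := hB.1
  refine ⟨primitive (xCoord i.castSucc) (hBasis i.castSucc) B, mem_g3P1e.2 ⟨?_, ?_⟩,
    fun Y Z => by rw [evec_castSucc, primitive_self (by simp)]⟩
  · exact primitive_mem_g3P1 hsymm (by simp [Cvec_eq]) hB.2.1
      (by simp [Svec_eq, Fin.castSucc_ne_last]) (by simp) fun Y => by rw [hB.2.2.1, hB.2.1]
  · refine forall_apply_evec_eq_zero (m := m) (k := i) (by omega) (fun t ht => ?_)
      (fun h => absurd h (by omega)) (fun _ h => absurd h (by omega))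
    funext Y Z
    rw [primitive_comm₁₂ hsymm, primitive_comm₂₃ hsymm,
      primitive_eq_zero_right (by simp [Fin.ext_iff, ht.ne'])
        fun X => by rw [hsymm, apply_hBasis_of_mem_g2P1e hB ht, LinearMap.zero_apply]]
    rfl

lemma exists_prolongation_mid (hB : B ∈ g2P1e (m + 1) m) :
    ∃ A ∈ g3P1e (m + 1) m, ∀ Y Z, A (evec (m + 1) (m + 1)) Y Z = B Y Z := by
  set M : Fin m → Fin m → ℝ := fun t r => B (vBasis t.castSucc) (vBasis r.castSucc)
  have hM (a b : Fin m) : M a b = M b a := hB.1 _ _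
  refine ⟨cubicForm univ (fun _ _ _ => B (Svec _) (Svec _)) (fun _ : Unit => xCoord (Fin.last m))
      + cubicForm univ (tensorPrimitive univ M) (fun t => yCoord t.castSucc),
    mem_g3P1e.2 ⟨add_mem ?_ ?_, ?_⟩, fun Y Z => ?_⟩
  · exact cubicForm_mem_g3P1 (fun _ _ _ => rfl) (fun _ _ _ => rfl) (by simp [Cvec_eq])
      fun X Y => cubicForm_eq_zero_right (by simp) X _
  · exact cubicForm_mem_g3P1 (tensorPrimitive_comm₁₂ hM) (tensorPrimitive_comm₂₃ hM)
      (by simp [Cvec_eq, Fin.castSucc_ne_last])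
      fun X Y => cubicForm_eq_zero_mid (by simp [Svec_eq]) _ _
  · refine forall_apply_evec_eq_zero (m := m) (k := m) (by omega) (fun t _ => ?_)
      (fun h => absurd h (by omega)) (fun _ h => absurd h (by omega))
    funext Y Z
    simp only [Pi.add_apply]
    rw [cubicForm_eq_zero_left (by simp [Fin.castSucc_ne_last]),
      cubicForm_eq_zero_left (by simp), add_zero]
    rfl
  · simp only [Pi.add_apply]
    rw [cubicForm_tensorPrimitive_apply hM (c := 1) (fun t _ => by simp),
      apply_eq_of_mem_g2P1e_mid hB Y Z]
    simp [cubicForm, M]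

lemma exists_prolongation_vertical (i : Fin m) (hB : B ∈ g2P1e (m + 1) (m + 1 + i)) :
    ∃ A ∈ g3P1e (m + 1) (m + 1 + i),
      ∀ Y Z, A (evec (m + 1) (m + 1 + i + 1)) Y Z = B Y Z := by
  set M : Fin m → Fin m → ℝ := fun t r => -B (vBasis t.castSucc) (vBasis r.castSucc)
  have hM (a b : Fin m) : M a b = M b a := by simp only [M]; rw [hB.1]
  refine ⟨cubicForm (Ioi i) (tensorPrimitive (Ioi i) M) (yDiff i), mem_g3P1e.2 ⟨?_, ?_⟩,
    fun Y Z => ?_⟩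
  · exact cubicForm_mem_g3P1 (tensorPrimitive_comm₁₂ hM) (tensorPrimitive_comm₂₃ hM)
      (by simp [Cvec_eq, Fin.castSucc_ne_last])
      fun X Y => cubicForm_eq_zero_mid (by simp [Svec_eq]) _ _
  · refine forall_apply_evec_eq_zero (m := m) (by omega) (fun t _ => ?_) (fun _ => ?_)
      (fun t ht => ?_) <;> funext Y Z <;> refine cubicForm_eq_zero_left (fun u hu => ?_) Y Z
    · simp
    · simp
    · have hu' : u.castSucc ≠ t := Fin.ne_of_val_ne <| by
        have := Fin.lt_def.1 (mem_Ioi.1 hu); rw [Fin.val_castSucc]; omega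
      have hi' : i.castSucc ≠ t := Fin.ne_of_val_ne <| by rw [Fin.val_castSucc]; omega
      simp [hu', hi']
  · rw [show m + 1 + (i : ℕ) + 1 = m + 1 + (i.castSucc : ℕ) + 1 from rfl, evec_vBasis,
      cubicForm_tensorPrimitive_apply hM (c := -1) (fun t ht => ?_),
      apply_eq_of_mem_g2P1e_vertical i hB]
    · simp [M, ← sum_neg_distrib]
    · simp [(mem_Ioi.1 ht).ne']

lemma exists_prolongation_top (hB : B ∈ g2P1e (m + 1) (2 * m + 1)) :
    ∃ A ∈ g3P1e (m + 1) (2 * m + 1), ∀ Y Z, A (evec (m + 1) (2 * m + 1 + 1)) Y Z = B Y Z := by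
  have hB0 : B = 0 := eq_zero_of_evec fun j hj1 hj2 => by
    obtain hj | rfl := Nat.lt_or_eq_of_le hj2
    · exact LinearMap.ext (hB.2.2.2 j hj1 (by omega))
    · rw [show 2 * (m + 1) = m + 1 + (Fin.last m : ℕ) + 1 by rw [Fin.val_last]; ring, evec_vBasis,
        ← Cvec_eq, apply_Cvec_of_mem_g2P1e hB]
  exact ⟨0, zero_mem _, fun Y Z => by simp [hB0]⟩

lemma le_map_g3P1e (hk : k < 2 * (m + 1)) :
    (g2P1e (m + 1) k).map (bilToFun (m + 1)) ≤
      (g3P1e (m + 1) k).map (LinearMap.proj (evec (m + 1) (k + 1))) := by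
  rintro _ ⟨B, hB, rfl⟩
  refine mem_map_of_exists ?_
  obtain hkm | rfl | hkm := lt_trichotomy k m
  · exact exists_prolongation_horizontal ⟨k, hkm⟩ hB
  · exact exists_prolongation_mid hB
  · obtain hk' | rfl := Nat.lt_or_eq_of_le (show k ≤ 2 * m + 1 by omega)
    · obtain ⟨i, rfl⟩ : ∃ i : Fin m, k = m + 1 + i := ⟨⟨k - m - 1, by omega⟩, (by omega : k = m + 1 + (k - m - 1))⟩
      exact exists_prolongation_vertical i hB
    · exact exists_prolongation_top hB

end Prolongation

end RapcsakSymbol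

open RapcsakSymbol

/-- the symbol of the Rapcsák operator `P₁` is involutive: the basis
`e_1, …, e_{2n}` is quasi-regular. -/
theorem symbolP1_involutive (n : ℕ) (hn : 1 ≤ n) :
    Module.finrank ℝ (g3P1 n) =
      Module.finrank ℝ (g2P1 n) +
        ∑ k ∈ Finset.Icc 1 (2 * n), Module.finrank ℝ (g2P1e n k) := by
  obtain ⟨m, rfl⟩ : ∃ m, n = m + 1 := ⟨n - 1, by omega⟩
  have hchain := Nat.eq_sum_range_add_of_eq_add_succ
    (f := fun k => finrank ℝ (g3P1e (m + 1) k)) (g := fun k => finrank ℝ (g2P1e (m + 1) k))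
    fun k hk => finrank_g3P1e_eq_add k (le_map_g3P1e hk)
  have htop : finrank ℝ (g2P1e (m + 1) (2 * (m + 1))) = 0 := by
    rw [g2P1e_top_eq_bot, finrank_bot]
  rw [g3P1e_zero, g3P1e_top_eq_bot, finrank_bot, add_zero] at hchain
  rw [hchain, ← add_zero (∑ k ∈ _, _), ← htop, ← sum_range_succ,
    sum_range_eq_add_Ico _ (by omega), Ico_add_one_right_eq_Icc, g2P1e_zero]
end
end

section
/- The kernel g₂(P₂) of the symbol of the extended Rapcsák operator has dimension n(n+1)/2 + n(n−1); precisely, the subspace of symmetric bilinear forms A : V × V → ℝ satisfying A(X, C) = 0 for all X ∈ V and A(P_h X, J Y) = A(P_h Y, J X) for all X, Y ∈ V has dimension n(n+1)/2 + n(n−1). -/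
set_option synthInstance.maxHeartbeats 1000000
set_option maxHeartbeats 1000000

noncomputable section

/-- The kernel `g₂(P₂)` of the symbol of the extended Rapcsák operator: symmetric
bilinear forms `A` on `V` with `A(X, C) = 0` and `A(P_h X, J Y) = A(P_h Y, J X)`. -/
def g2P2 (n : ℕ) : Submodule ℝ (Bil n) where
  carrier := {A | (∀ X Y, A X Y = A Y X) ∧ (∀ X, A X (Cvec n) = 0) ∧
    (∀ X Y, A (Ph n X) (Jmap n Y) = A (Ph n Y) (Jmap n X))}
  add_mem' := by
    rintro a b ⟨ha1, ha2, ha3⟩ ⟨hb1, hb2, hb3⟩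
    refine ⟨fun X Y => ?_, fun X => ?_, fun X Y => ?_⟩ <;>
      simp only [LinearMap.add_apply]
    · linear_combination ha1 X Y + hb1 X Y
    · linear_combination ha2 X + hb2 X
    · linear_combination ha3 X Y + hb3 X Y
  zero_mem' := ⟨fun X Y => by simp, fun X => by simp, fun X Y => by simp⟩
  smul_mem' := by
    rintro c a ⟨ha1, ha2, ha3⟩
    refine ⟨fun X Y => ?_, fun X => ?_, fun X Y => ?_⟩ <;>
      simp only [LinearMap.smul_apply, smul_eq_mul]
    · linear_combination c * ha1 X Y
    · linear_combination c * ha2 X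
    · linear_combination c * ha3 X Y

/-!
A symmetric form on `V = H ⊕ W` is determined by its horizontal–horizontal, horizontal–vertical
and vertical–vertical blocks. The condition `A(P_h X, J Y) = A(P_h Y, J X)` says exactly that the
mixed block is symmetric, and `A(·, C) = 0` kills the last row and column of the mixed and the
vertical block. Hence `g₂(P₂) ≅ Sym(ℝⁿ) × Sym(ℝⁿ⁻¹) × Sym(ℝⁿ⁻¹)`.
-/

open Module Matrix

namespace Matrix

section Symmetric

variable (K : Type*) [Semiring K] (ι : Type*)

def symmetricSubmodule : Submodule K (Matrix ι ι K) where
  carrier := {A | A.IsSymm}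
  add_mem' := IsSymm.add
  zero_mem' := isSymm_zero
  smul_mem' c _ h := h.smul c

def symmetricSubmoduleEquivSym2 : symmetricSubmodule K ι ≃ₗ[K] (Sym2 ι → K) where
  toFun A := Sym2.lift ⟨A.1, fun i j => A.2.apply j i⟩
  invFun f := ⟨of fun i j => f s(i, j), IsSymm.ext fun i j => by simp [Sym2.eq_swap]⟩
  map_add' _ _ := by ext ⟨i, j⟩; rfl
  map_smul' _ _ := by ext ⟨i, j⟩; rfl
  left_inv _ := rfl
  right_inv _ := by ext ⟨i, j⟩; rfl

end Symmetric

theorem finrank_symmetricSubmodule (K : Type*) [Ring K] [StrongRankCondition K] (ι : Type*)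
    [Fintype ι] :
    finrank K (symmetricSubmodule K ι) = Fintype.card ι * (Fintype.card ι + 1) / 2 := by
  rw [(symmetricSubmoduleEquivSym2 K ι).finrank_eq, finrank_fintype_fun_eq_card, Sym2.card,
    Nat.choose_two_right, Nat.add_sub_cancel, mul_comm]

end Matrix

theorem LinearMap.funLeft_val_single {R α : Type*} [Semiring R] [DecidableEq α] {p : α → Prop}
    (i : Subtype p) (x : R) :
    LinearMap.funLeft R R Subtype.val (Pi.single (i : α) x) = Pi.single i x := by
  ext k
  simp [LinearMap.funLeft_apply, Pi.single_apply, Subtype.val_inj]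

/-- The indices of `Fin n` other than the last one, which carries `S` and `C`. -/
abbrev NonLast (n : ℕ) : Type := {i : Fin n // (i : ℕ) < n - 1}

theorem card_nonLast (n : ℕ) : Fintype.card (NonLast n) = n - 1 :=
  Fintype.card_fin_lt_of_le (Nat.sub_le n 1)

theorem Matrix.eq_of_submatrix_nonLast_eq {α : Type*} [Zero α] {n : ℕ}
    {F G : Matrix (Fin n) (Fin n) α} (hF : F.IsSymm) (hG : G.IsSymm)
    (hF₀ : ∀ i j : Fin n, ¬ (j : ℕ) < n - 1 → F i j = 0)
    (hG₀ : ∀ i j : Fin n, ¬ (j : ℕ) < n - 1 → G i j = 0)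
    (h : (F.submatrix Subtype.val Subtype.val : Matrix (NonLast n) (NonLast n) α) =
      G.submatrix Subtype.val Subtype.val) :
    F = G := by
  ext i j
  by_cases hj : (j : ℕ) < n - 1
  · by_cases hi : (i : ℕ) < n - 1
    · exact congr_fun₂ h ⟨i, hi⟩ ⟨j, hj⟩
    · rw [← hF.apply, ← hG.apply, hF₀ j i hi, hG₀ j i hi]
  · rw [hF₀ i j hj, hG₀ i j hj]

theorem vertical_single_eq_Cvec {n : ℕ} {i : Fin n} (hi : ¬ (i : ℕ) < n - 1) :
    ((0, Pi.single i 1) : V n) = Cvec n := by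
  have hlast : ∀ k : Fin n, k = i ↔ (k : ℕ) + 1 = n := fun k => by rw [Fin.ext_iff]; omega
  ext k
  · rfl
  · simp [Cvec, vvec, dlt, Pi.single_apply, hlast]

theorem funLeft_val_dlt (n : ℕ) :
    LinearMap.funLeft ℝ ℝ (Subtype.val : NonLast n → Fin n) (dlt n n) = 0 := by
  ext k
  simp only [LinearMap.funLeft_apply, dlt, Pi.zero_apply, ite_eq_right_iff, one_ne_zero]
  have := k.2
  omega

theorem apply_vertical_single_eq_zero {n : ℕ} {A : Bil n} (hA : A ∈ g2P2 n) (X : V n)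
    {j : Fin n} (hj : ¬ (j : ℕ) < n - 1) : A X (0, Pi.single j 1) = 0 := by
  rw [vertical_single_eq_Cvec hj]
  exact hA.2.1 X

def horizontalRestrict (n : ℕ) : V n →ₗ[ℝ] NonLast n → ℝ :=
  LinearMap.funLeft ℝ ℝ Subtype.val ∘ₗ LinearMap.fst ℝ _ _

def verticalRestrict (n : ℕ) : V n →ₗ[ℝ] NonLast n → ℝ :=
  LinearMap.funLeft ℝ ℝ Subtype.val ∘ₗ LinearMap.snd ℝ _ _

def formOfBlocks {n : ℕ} (F : Matrix (Fin n) (Fin n) ℝ) (G H : Matrix (NonLast n) (NonLast n) ℝ) :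
    Bil n :=
  F.toBilin'.compl₁₂ (LinearMap.fst ℝ _ _) (LinearMap.fst ℝ _ _) +
    G.toBilin'.compl₁₂ (horizontalRestrict n) (verticalRestrict n) +
    G.toBilin'.compl₁₂ (verticalRestrict n) (horizontalRestrict n) +
    H.toBilin'.compl₁₂ (verticalRestrict n) (verticalRestrict n)

theorem formOfBlocks_mem {n : ℕ} {F : Matrix (Fin n) (Fin n) ℝ}
    {G H : Matrix (NonLast n) (NonLast n) ℝ} (hF : F.IsSymm) (hG : G.IsSymm) (hH : H.IsSymm) :
    formOfBlocks F G H ∈ g2P2 n := by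
  have sF := (isSymm_toBilin'_iff_isSymm.2 hF).eq
  have sG := (isSymm_toBilin'_iff_isSymm.2 hG).eq
  have sH := (isSymm_toBilin'_iff_isSymm.2 hH).eq
  refine ⟨fun X Y => ?_, fun X => ?_, fun X Y => ?_⟩
  · simp only [formOfBlocks, LinearMap.add_apply, LinearMap.compl₁₂_apply]
    rw [sF, sG (horizontalRestrict n X), sG (verticalRestrict n X), sH]
    ring
  · simp [formOfBlocks, horizontalRestrict, verticalRestrict, Cvec, vvec, funLeft_val_dlt]
  · simp [formOfBlocks, horizontalRestrict, verticalRestrict, Ph, Jmap, sG]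

def g2P2Blocks (n : ℕ) : g2P2 n →ₗ[ℝ] symmetricSubmodule ℝ (Fin n) ×
    symmetricSubmodule ℝ (NonLast n) × symmetricSubmodule ℝ (NonLast n) where
  toFun A :=
    (⟨of fun i j => A.1 (Pi.single i 1, 0) (Pi.single j 1, 0), IsSymm.ext fun _ _ => A.2.1 _ _⟩,
      ⟨of fun i j => A.1 (Pi.single i 1, 0) (0, Pi.single j 1),
        IsSymm.ext fun i j => A.2.2.2 (Pi.single (j : Fin n) 1, 0) (Pi.single (i : Fin n) 1, 0)⟩,
      ⟨of fun i j => A.1 (0, Pi.single i 1) (0, Pi.single j 1), IsSymm.ext fun _ _ => A.2.1 _ _⟩)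
  map_add' _ _ := rfl
  map_smul' _ _ := rfl

theorem g2P2Blocks_formOfBlocks {n : ℕ} {F : Matrix (Fin n) (Fin n) ℝ}
    {G H : Matrix (NonLast n) (NonLast n) ℝ} (hF : F.IsSymm) (hG : G.IsSymm) (hH : H.IsSymm) :
    g2P2Blocks n ⟨formOfBlocks F G H, formOfBlocks_mem hF hG hH⟩ = (⟨F, hF⟩, ⟨G, hG⟩, ⟨H, hH⟩) := by
  refine Prod.ext (Subtype.ext ?_) (Prod.ext (Subtype.ext ?_) (Subtype.ext ?_)) <;> ext i j
  · show formOfBlocks F G H (Pi.single i 1, 0) (Pi.single j 1, 0) = F i j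
    simp [formOfBlocks, horizontalRestrict, verticalRestrict]
  · show formOfBlocks F G H (Pi.single (i : Fin n) 1, 0) (0, Pi.single (j : Fin n) 1) = G i j
    simp [formOfBlocks, horizontalRestrict, verticalRestrict, LinearMap.funLeft_val_single]
  · show formOfBlocks F G H (0, Pi.single (i : Fin n) 1) (0, Pi.single (j : Fin n) 1) = H i j
    simp [formOfBlocks, horizontalRestrict, verticalRestrict, LinearMap.funLeft_val_single]

theorem g2P2Blocks_surjective (n : ℕ) : Function.Surjective (g2P2Blocks n) := by
  rintro ⟨⟨F, hF⟩, ⟨G, hG⟩, ⟨H, hH⟩⟩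
  exact ⟨_, g2P2Blocks_formOfBlocks hF hG hH⟩

theorem g2P2Blocks_injective (n : ℕ) : Function.Injective (g2P2Blocks n) := by
  rintro ⟨A, hA⟩ ⟨B, hB⟩ h
  have mixed : (of fun i j => A (Pi.single i 1, 0) (0, Pi.single j 1) : Matrix _ _ ℝ) =
      of fun i j => B (Pi.single i 1, 0) (0, Pi.single j 1) :=
    eq_of_submatrix_nonLast_eq
      (IsSymm.ext fun i j => hA.2.2 (Pi.single j 1, 0) (Pi.single i 1, 0))
      (IsSymm.ext fun i j => hB.2.2 (Pi.single j 1, 0) (Pi.single i 1, 0))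
      (fun _ _ => apply_vertical_single_eq_zero hA _)
      (fun _ _ => apply_vertical_single_eq_zero hB _)
      (congrArg Subtype.val (congrArg (fun t => t.2.1) h))
  have vertical : (of fun i j => A (0, Pi.single i 1) (0, Pi.single j 1) : Matrix _ _ ℝ) =
      of fun i j => B (0, Pi.single i 1) (0, Pi.single j 1) :=
    eq_of_submatrix_nonLast_eq (IsSymm.ext fun _ _ => hA.1 _ _) (IsSymm.ext fun _ _ => hB.1 _ _)
      (fun _ _ => apply_vertical_single_eq_zero hA _)
      (fun _ _ => apply_vertical_single_eq_zero hB _)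
      (congrArg Subtype.val (congrArg (fun t => t.2.2) h))
  refine Subtype.ext ?_
  ext i j
  · exact congr_fun₂ (congrArg Subtype.val (congrArg Prod.fst h)) i j
  · exact congr_fun₂ mixed i j
  · exact (hA.1 _ _).trans ((congr_fun₂ mixed j i).trans (hB.1 _ _))
  · exact congr_fun₂ vertical i j

def g2P2EquivBlocks (n : ℕ) : g2P2 n ≃ₗ[ℝ] symmetricSubmodule ℝ (Fin n) ×
    symmetricSubmodule ℝ (NonLast n) × symmetricSubmodule ℝ (NonLast n) :=
  LinearEquiv.ofBijective (g2P2Blocks n) ⟨g2P2Blocks_injective n, g2P2Blocks_surjective n⟩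

theorem dim_g2P2_general (n : ℕ) :
    Module.finrank ℝ (g2P2 n) = n * (n + 1) / 2 + n * (n - 1) := by
  rw [(g2P2EquivBlocks n).finrank_eq, finrank_prod, finrank_prod, finrank_symmetricSubmodule,
    finrank_symmetricSubmodule, Fintype.card_fin, card_nonLast]
  obtain ⟨k, hk⟩ := Nat.even_mul_pred_self n
  have hpred : (n - 1) * (n - 1 + 1) = n * (n - 1) := by cases n <;> simp [mul_comm]
  rw [hpred, hk]
  omega

/-- the kernel `g₂(P₂)` of the symbol of the extended Rapcsák operator
has dimension `n(n+1)/2 + n(n−1)`. -/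
theorem dim_g2P2 (n : ℕ) (hn : 1 ≤ n) :
    Module.finrank ℝ (g2P2 n) = n * (n + 1) / 2 + n * (n - 1) :=
  dim_g2P2_general n
end
end

section
/- The composition τ₂ ∘ σ₃(P₂) vanishes: for every symmetric trilinear form A on V, the pair (B_Γ, B_C) with B_Γ(X,Y,Z) := 2(A(X, P_h Y, J Z) − A(X, P_h Z, J Y)) and B_C(X,Y) := A(X, Y, C) satisfies, for all X, Y, Z ∈ V: (i) B_Γ(P_h X, Y, Z) + B_Γ(P_h Y, Z, X) + B_Γ(P_h Z, X, Y) = 0; (ii) B_Γ(J X, Y, Z) + B_Γ(J Y, Z, X) + B_Γ(J Z, X, Y) = 0; (iii) (1/2)·B_Γ(C, X, Y) − B_C(P_h X, J Y) + B_C(P_h Y, J X) = 0. -/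
set_option synthInstance.maxHeartbeats 1000000
set_option maxHeartbeats 1000000

noncomputable section

/-- the composition `τ₂ ∘ σ₃(P₂)` vanishes. -/
theorem tau2_comp_sigma3P2 (n : ℕ) (hn : 1 ≤ n) (A : Tri n)
    (hsym12 : ∀ X Y Z, A X Y Z = A Y X Z) (hsym23 : ∀ X Y Z, A X Y Z = A X Z Y)
    (BG : V n → V n → V n → ℝ) (BC : V n → V n → ℝ)
    (hBG : ∀ X Y Z, BG X Y Z = 2 * (A X (Ph n Y) (Jmap n Z) - A X (Ph n Z) (Jmap n Y)))
    (hBC : ∀ X Y, BC X Y = A X Y (Cvec n)) :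
    (∀ X Y Z, BG (Ph n X) Y Z + BG (Ph n Y) Z X + BG (Ph n Z) X Y = 0) ∧
    (∀ X Y Z, BG (Jmap n X) Y Z + BG (Jmap n Y) Z X + BG (Jmap n Z) X Y = 0) ∧
    (∀ X Y, (1 / 2 : ℝ) * BG (Cvec n) X Y
      - BC (Ph n X) (Jmap n Y) + BC (Ph n Y) (Jmap n X) = 0) := by
  have h13 : ∀ a b c, A a b c = A c b a := by
    intro a b c; rw [hsym23, hsym12, hsym23]
  refine ⟨?_, ?_, ?_⟩
  · intro X Y Z
    simp only [hBG]
    linear_combination 2 * hsym12 (Ph n X) (Ph n Y) (Jmap n Z)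
      + 2 * hsym12 (Ph n Y) (Ph n Z) (Jmap n X)
      + 2 * hsym12 (Ph n Z) (Ph n X) (Jmap n Y)
  · intro X Y Z
    simp only [hBG]
    linear_combination 2 * h13 (Jmap n X) (Ph n Y) (Jmap n Z)
      + 2 * h13 (Jmap n Y) (Ph n Z) (Jmap n X)
      + 2 * h13 (Jmap n Z) (Ph n X) (Jmap n Y)
  · intro X Y
    simp only [hBG, hBC]
    have hC : ∀ a b, A (Cvec n) a b = A a b (Cvec n) := by
      intro a b; rw [hsym12, hsym23]
    linear_combination (1/2 : ℝ) * (2 * hC (Ph n X) (Jmap n Y) - 2 * hC (Ph n Y) (Jmap n X))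
end
end
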